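/- arXiv:1311.3605 — 8 statements merged into one kernel-verified Lean document; each statement's English description precedes it below -/
import Mathlib

section
/- Under assumptions (E1), (E2), and the locality assumption (LOC), E_{ab}(D1D2) = ∫_Ω 𝐚·𝐛 dP, where 𝐚 := μ_{A=a}({D1 = +1} | λ) − μ_{A=a}({D1 = −1} | λ) and 𝐛 := μ_{B=b}({D2 = +1} | λ) − μ_{B=b}({D2 = −1} | λ). -/
open MeasureTheory ProbabilityTheory

/-- Conditional probability of the event `E` given the sub-σ-algebra `m`:
the conditional expectation of the indicator function of `E`. -/
noncomputable def cprob {Ω : Type*} [MeasurableSpace Ω] (P : Measure Ω)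
    (m : MeasurableSpace Ω) (E : Set Ω) : Ω → ℝ :=
  P[E.indicator (fun _ => (1 : ℝ)) | m]

/-- `μ_X(Y | λ) := (1 / P(X)) · P(Y ∩ X | m)` where `m` is a sub-σ-algebra
(in applications, `m = σ(λ)`). -/
noncomputable def muC {Ω : Type*} [F : MeasurableSpace Ω] (P : Measure Ω)
    (m : MeasurableSpace Ω) (X Y : Set Ω) : Ω → ℝ :=
  fun ω => (1 / (P X).toReal) * @cprob Ω F P m (Y ∩ X) ω

/-!
Write `D₁ · 1{A = a} = 1{D₁ = 1, A = a} - 1{D₁ = -1, A = a}` and likewise for `D₂`.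
Then `P(A = a) P(B = b) E_{ab}(D₁D₂)` (independence of the settings gives
`P(A = a, B = b)`) is the signed sum of the four probabilities
`P(D₁ = s, A = a, D₂ = t, B = b)`. By locality each of them is
`∫ P(D₁ = s, A = a | λ) P(D₂ = t, B = b | λ) dP`, and the same signed sum of these
integrals is `P(A = a) P(B = b) ∫ 𝐚 𝐛 dP`.
-/

lemma integral_cond_eq_inv_smul_setIntegral {Ω E : Type*} [MeasurableSpace Ω]
    [NormedAddCommGroup E] [NormedSpace ℝ E] (μ : Measure Ω) (s : Set Ω) (f : Ω → E) :
    ∫ x, f x ∂μ[|s] = (μ.real s)⁻¹ • ∫ x in s, f x ∂μ := by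
  rw [ProbabilityTheory.cond, integral_smul_measure, ENNReal.toReal_inv, measureReal_def]

lemma integral_sub_mul_sub {Ω : Type*} [MeasurableSpace Ω] {μ : Measure Ω}
    {f f' g g' : Ω → ℝ}
    (hfg : Integrable (f * g) μ) (hfg' : Integrable (f * g') μ)
    (hf'g : Integrable (f' * g) μ) (hf'g' : Integrable (f' * g') μ) :
    ∫ x, (f x - f' x) * (g x - g' x) ∂μ = ∫ x, f x * g x ∂μ - ∫ x, f x * g' x ∂μ
      - ∫ x, f' x * g x ∂μ + ∫ x, f' x * g' x ∂μ := by
  have hexp : (fun x => (f x - f' x) * (g x - g' x))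
      = (f * g - f * g') - (f' * g - f' * g') := by
    ext x; simp only [Pi.sub_apply, Pi.mul_apply]; ring
  rw [hexp, integral_sub' (hfg.sub hfg') (hf'g.sub hf'g'), integral_sub' hfg hfg',
    integral_sub' hf'g hf'g']
  simp only [Pi.mul_apply]
  ring

section ConditionalProbability

variable {Ω : Type*} {m : MeasurableSpace Ω} [MeasurableSpace Ω] {P : Measure Ω}
  [IsFiniteMeasure P] {E F : Set Ω}

lemma integral_cprob (hm : m ≤ ‹MeasurableSpace Ω›) (hE : MeasurableSet E) :
    ∫ ω, cprob P m E ω ∂P = P.real E := by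
  rw [cprob, integral_condExp hm, integral_indicator_const _ hE, smul_eq_mul, mul_one]

-- Both sides equal `P (E ∩ F)`.
lemma integral_cprob_mul_cprob (hm : m ≤ ‹MeasurableSpace Ω›) (hE : MeasurableSet E)
    (hF : MeasurableSet F)
    (hloc : cprob P m (E ∩ F) =ᵐ[P] fun ω => cprob P m E ω * cprob P m F ω) :
    ∫ ω, cprob P m E ω * cprob P m F ω ∂P
      = ∫ ω, E.indicator 1 ω * F.indicator (1 : Ω → ℝ) ω ∂P := by
  rw [← integral_congr_ae hloc, integral_cprob hm (hE.inter hF),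
    ← integral_indicator_one (hE.inter hF), Set.inter_indicator_one]
  rfl

lemma integral_sub_cprob_mul_sub_cprob (hm : m ≤ ‹MeasurableSpace Ω›) {E' F' : Set Ω}
    (hE : MeasurableSet E) (hE' : MeasurableSet E') (hF : MeasurableSet F)
    (hF' : MeasurableSet F')
    (hEF : cprob P m (E ∩ F) =ᵐ[P] fun ω => cprob P m E ω * cprob P m F ω)
    (hEF' : cprob P m (E ∩ F') =ᵐ[P] fun ω => cprob P m E ω * cprob P m F' ω)
    (hE'F : cprob P m (E' ∩ F) =ᵐ[P] fun ω => cprob P m E' ω * cprob P m F ω)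
    (hE'F' : cprob P m (E' ∩ F') =ᵐ[P] fun ω => cprob P m E' ω * cprob P m F' ω) :
    ∫ ω, (cprob P m E ω - cprob P m E' ω) * (cprob P m F ω - cprob P m F' ω) ∂P
      = ∫ ω, (E.indicator 1 ω - E'.indicator 1 ω)
          * (F.indicator 1 ω - F'.indicator (1 : Ω → ℝ) ω) ∂P := by
  have hind : ∀ {X Y : Set Ω}, MeasurableSet X → MeasurableSet Y →
      Integrable (X.indicator 1 * Y.indicator (1 : Ω → ℝ)) P := fun hX hY => by
    rw [← Set.inter_indicator_one]
    exact (integrable_const 1).indicator (hX.inter hY)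
  rw [integral_sub_mul_sub (integrable_condExp.congr hEF) (integrable_condExp.congr hEF')
      (integrable_condExp.congr hE'F) (integrable_condExp.congr hE'F'),
    integral_sub_mul_sub (hind hE hF) (hind hE hF') (hind hE' hF) (hind hE' hF'),
    integral_cprob_mul_cprob hm hE hF hEF, integral_cprob_mul_cprob hm hE hF' hEF',
    integral_cprob_mul_cprob hm hE' hF hE'F, integral_cprob_mul_cprob hm hE' hF' hE'F']

end ConditionalProbability

lemma indicator_eq_sub_indicator_of_eq_one_or_neg_one {Ω : Type*} {D : Ω → ℝ}
    (hD : ∀ ω, D ω = 1 ∨ D ω = -1) (S : Set Ω) (ω : Ω) :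
    S.indicator D ω
      = ({ω | D ω = 1} ∩ S).indicator 1 ω - ({ω | D ω = -1} ∩ S).indicator 1 ω := by
  by_cases hS : ω ∈ S <;> rcases hD ω with h | h <;> norm_num [Set.indicator, hS, h]

/-- Settings `a, a′` are modelled by `true, false : Bool` (likewise `b, b′`). -/
theorem stmt2_general {Ω : Type*} [MeasurableSpace Ω] (P : Measure Ω) [IsProbabilityMeasure P]
    {Λ : Type*} [MeasurableSpace Λ] (lam : Ω → Λ) (hlam : Measurable lam)
    (A B : Ω → Bool) (hA : Measurable A) (hB : Measurable B)
    (D1 D2 : Ω → ℝ) (hD1 : Measurable D1) (hD2 : Measurable D2)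
    (hD1v : ∀ ω, D1 ω = 1 ∨ D1 ω = -1) (hD2v : ∀ ω, D2 ω = 1 ∨ D2 ω = -1)
    (hE1 : IndepFun A B P)
    (hLOC : ∀ E1 E2 : Set Ω,
      MeasurableSet[MeasurableSpace.comap (fun ω => (D1 ω, A ω)) inferInstance] E1 →
      MeasurableSet[MeasurableSpace.comap (fun ω => (D2 ω, B ω)) inferInstance] E2 →
      cprob P (MeasurableSpace.comap lam inferInstance) (E1 ∩ E2) =ᵐ[P]
        fun ω => cprob P (MeasurableSpace.comap lam inferInstance) E1 ω *
          cprob P (MeasurableSpace.comap lam inferInstance) E2 ω) :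
    ∫ ω, D1 ω * D2 ω ∂(P[|{ω | A ω = true} ∩ {ω | B ω = true}]) =
      ∫ ω, (muC P (MeasurableSpace.comap lam inferInstance) {ω | A ω = true} {ω | D1 ω = 1} ω
            - muC P (MeasurableSpace.comap lam inferInstance) {ω | A ω = true} {ω | D1 ω = -1} ω)
          * (muC P (MeasurableSpace.comap lam inferInstance) {ω | B ω = true} {ω | D2 ω = 1} ω
            - muC P (MeasurableSpace.comap lam inferInstance) {ω | B ω = true} {ω | D2 ω = -1} ω) ∂P := by
  set SA := {ω | A ω = true}
  set SB := {ω | B ω = true}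
  have hSA : MeasurableSet SA := hA (measurableSet_singleton true)
  have hSB : MeasurableSet SB := hB (measurableSet_singleton true)
  have hE s : MeasurableSet ({ω | D1 ω = s} ∩ SA) := (hD1 (measurableSet_singleton s)).inter hSA
  have hF t : MeasurableSet ({ω | D2 ω = t} ∩ SB) := (hD2 (measurableSet_singleton t)).inter hSB
  have hloc s t := hLOC ({ω | D1 ω = s} ∩ SA) ({ω | D2 ω = t} ∩ SB)
    ⟨{s} ×ˢ {true}, (measurableSet_singleton s).prod (measurableSet_singleton true), rfl⟩
    ⟨{t} ×ˢ {true}, (measurableSet_singleton t).prod (measurableSet_singleton true), rfl⟩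
  have hindep : P.real (SA ∩ SB) = P.real SA * P.real SB := by
    rw [measureReal_def, measureReal_def, measureReal_def, ← ENNReal.toReal_mul]
    exact congrArg ENNReal.toReal (hE1.measure_inter_preimage_eq_mul {true} {true}
      (measurableSet_singleton _) (measurableSet_singleton _))
  calc ∫ ω, D1 ω * D2 ω ∂(P[|SA ∩ SB])
      = (P.real SA)⁻¹ * (P.real SB)⁻¹
          * ∫ ω, (SA ∩ SB).indicator (fun ω => D1 ω * D2 ω) ω ∂P := by
        rw [integral_cond_eq_inv_smul_setIntegral, hindep, mul_inv, smul_eq_mul,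
          integral_indicator (hSA.inter hSB)]
    _ = (P.real SA)⁻¹ * (P.real SB)⁻¹ * ∫ ω, (({ω | D1 ω = 1} ∩ SA).indicator 1 ω
          - ({ω | D1 ω = -1} ∩ SA).indicator 1 ω) * (({ω | D2 ω = 1} ∩ SB).indicator 1 ω
          - ({ω | D2 ω = -1} ∩ SB).indicator 1 ω) ∂P := by
        simp only [Set.inter_indicator_mul, indicator_eq_sub_indicator_of_eq_one_or_neg_one hD1v,
          indicator_eq_sub_indicator_of_eq_one_or_neg_one hD2v]
    _ = (P.real SA)⁻¹ * (P.real SB)⁻¹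
          * ∫ ω, (cprob P (.comap lam inferInstance) ({ω | D1 ω = 1} ∩ SA) ω
          - cprob P (.comap lam inferInstance) ({ω | D1 ω = -1} ∩ SA) ω)
          * (cprob P (.comap lam inferInstance) ({ω | D2 ω = 1} ∩ SB) ω
          - cprob P (.comap lam inferInstance) ({ω | D2 ω = -1} ∩ SB) ω) ∂P := by
        rw [integral_sub_cprob_mul_sub_cprob hlam.comap_le (hE 1) (hE (-1)) (hF 1) (hF (-1))
          (hloc 1 1) (hloc 1 (-1)) (hloc (-1) 1) (hloc (-1) (-1))]
    _ = _ := by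
        rw [← integral_const_mul]
        simp only [muC, one_div, ← measureReal_def]
        congr 1 with ω
        ring

/-- under (E1), (E2) and locality (LOC),
`E_{ab}(D1·D2) = ∫ 𝐚·𝐛 dP` where
`𝐚 = μ_{A=a}({D1=+1}|λ) − μ_{A=a}({D1=−1}|λ)` and
`𝐛 = μ_{B=b}({D2=+1}|λ) − μ_{B=b}({D2=−1}|λ)`.
Settings `a, a′` are modelled by `true, false : Bool` (likewise `b, b′`). -/
theorem stmt2 {Ω : Type*} [MeasurableSpace Ω] (P : Measure Ω) [IsProbabilityMeasure P]
    {Λ : Type*} [MeasurableSpace Λ] (lam : Ω → Λ) (hlam : Measurable lam)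
    (A B : Ω → Bool) (hA : Measurable A) (hB : Measurable B)
    (D1 D2 : Ω → ℝ) (hD1 : Measurable D1) (hD2 : Measurable D2)
    (hD1v : ∀ ω, D1 ω = 1 ∨ D1 ω = -1) (hD2v : ∀ ω, D2 ω = 1 ∨ D2 ω = -1)
    (hE1 : IndepFun A B P)
    (hE2 : 0 < P {ω | A ω = true} ∧ 0 < P {ω | A ω = false} ∧
           0 < P {ω | B ω = true} ∧ 0 < P {ω | B ω = false})
    (hLOC : ∀ E1 E2 : Set Ω,
      MeasurableSet[MeasurableSpace.comap (fun ω => (D1 ω, A ω)) inferInstance] E1 →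
      MeasurableSet[MeasurableSpace.comap (fun ω => (D2 ω, B ω)) inferInstance] E2 →
      cprob P (MeasurableSpace.comap lam inferInstance) (E1 ∩ E2) =ᵐ[P]
        fun ω => cprob P (MeasurableSpace.comap lam inferInstance) E1 ω *
          cprob P (MeasurableSpace.comap lam inferInstance) E2 ω) :
    ∫ ω, D1 ω * D2 ω ∂(P[|{ω | A ω = true} ∩ {ω | B ω = true}]) =
      ∫ ω, (muC P (MeasurableSpace.comap lam inferInstance) {ω | A ω = true} {ω | D1 ω = 1} ω
            - muC P (MeasurableSpace.comap lam inferInstance) {ω | A ω = true} {ω | D1 ω = -1} ω)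
          * (muC P (MeasurableSpace.comap lam inferInstance) {ω | B ω = true} {ω | D2 ω = 1} ω
            - muC P (MeasurableSpace.comap lam inferInstance) {ω | B ω = true} {ω | D2 ω = -1} ω) ∂P :=
  stmt2_general P lam hlam A B hA hB D1 D2 hD1 hD2 hD1v hD2v hE1 hLOC
end

section
/- (CHSH inequality) Under assumptions (E1), (E2), (E3), and the locality assumption (LOC), the quantity K^CHSH := E_{ab}(D1D2) − E_{a′b}(D1D2) + E_{ab′}(D1D2) + E_{a′b′}(D1D2) satisfies |K^CHSH| ≤ 2. -/
/-! Conditionally on the hidden state `λ`, locality makes the correlation of `D1` and `D2` on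
`{A = x} ∩ {B = y}` factor into a product `X_x(λ) Y_y(λ)` of local expectations. Because the
settings are independent of `λ` and of each other, the normalisation by `P(A = x ∩ B = y)`
splits as `P(A = x) P(B = y)`, and after it `|X_x|, |Y_y| ≤ 1`. The CHSH combination is then the
integral of `X_a (Y_b + Y_b') + X_a' (Y_b' - Y_b)`, which is pointwise at most `2` in absolute
value. -/

open MeasureTheory ProbabilityTheory

lemma abs_chsh_le_two {p q r s : ℝ} (hp : |p| ≤ 1) (hq : |q| ≤ 1) (hr : |r| ≤ 1) (hs : |s| ≤ 1) :
    |p * r - q * r + p * s + q * s| ≤ 2 := by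
  have hrs : |r + s| + |s - r| ≤ 2 := by
    rcases abs_le.1 hr with ⟨hr₁, hr₂⟩
    rcases abs_le.1 hs with ⟨hs₁, hs₂⟩
    rcases abs_cases (r + s) with ⟨h₁, -⟩ | ⟨h₁, -⟩ <;>
      rcases abs_cases (s - r) with ⟨h₂, -⟩ | ⟨h₂, -⟩ <;> linarith
  calc |p * r - q * r + p * s + q * s| = |p * (r + s) + q * (s - r)| := by ring_nf
    _ ≤ |p| * |r + s| + |q| * |s - r| := by
      grw [abs_add_le, abs_mul, abs_mul]
    _ ≤ 1 * |r + s| + 1 * |s - r| := by gcongr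
    _ ≤ 2 := by linarith

lemma abs_inv_mul_le_one_of_abs_le {c z : ℝ} (h : |z| ≤ c) : |c⁻¹ * z| ≤ 1 := by
  have hc : 0 ≤ c := (abs_nonneg z).trans h
  rw [abs_mul, abs_inv, abs_of_nonneg hc]
  exact inv_mul_le_one_of_le₀ h hc

lemma eq_indicator_sub_indicator_of_trichotomy {Ω : Type*} {F : Ω → ℝ}
    (hF : ∀ ω, F ω = -1 ∨ F ω = 0 ∨ F ω = 1) :
    F = (F ⁻¹' {1}).indicator (fun _ => 1) - (F ⁻¹' {-1}).indicator (fun _ => 1) := by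
  funext ω
  rcases hF ω with h | h | h <;>
    simp [Set.indicator, h] <;> norm_num

lemma indicator_eq_neg_one_or_zero_or_one {Ω : Type*} {D : Ω → ℝ}
    (hD : ∀ ω, D ω = 1 ∨ D ω = -1) (S : Set Ω) (ω : Ω) :
    S.indicator D ω = -1 ∨ S.indicator D ω = 0 ∨ S.indicator D ω = 1 := by
  by_cases hω : ω ∈ S <;> rcases hD ω with h | h <;> simp [hω, h]

lemma measurable_comap_prodMk_indicator {Ω β : Type*} [MeasurableSpace β]
    [MeasurableSingletonClass β] (D : Ω → ℝ) (A : Ω → β) (b : β) :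
    Measurable[MeasurableSpace.comap (fun ω => (D ω, A ω)) inferInstance]
      ({ω | A ω = b}.indicator D) :=
  (measurable_fst.comp (comap_measurable _)).indicator
    ((measurable_snd.comp (comap_measurable _)) (measurableSet_singleton b))

section

variable {Ω : Type*} {m m₁ m₂ : MeasurableSpace Ω} [mΩ : MeasurableSpace Ω] {P : Measure Ω}

lemma integral_cond_eq_inv_mul_integral_indicator {s : Set Ω} (hs : MeasurableSet s)
    (f : Ω → ℝ) : ∫ ω, f ω ∂P[|s] = (P.real s)⁻¹ * ∫ ω, s.indicator f ω ∂P := by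
  rw [ProbabilityTheory.cond, integral_smul_measure, integral_indicator hs, ENNReal.toReal_inv,
    smul_eq_mul, measureReal_def]

lemma abs_integral_chsh_le_two [IsProbabilityMeasure P] {f₁ f₂ g₁ g₂ : Ω → ℝ}
    (hf₁ : AEStronglyMeasurable f₁ P) (hf₂ : AEStronglyMeasurable f₂ P)
    (hg₁ : AEStronglyMeasurable g₁ P) (hg₂ : AEStronglyMeasurable g₂ P)
    (hf₁' : ∀ᵐ ω ∂P, |f₁ ω| ≤ 1) (hf₂' : ∀ᵐ ω ∂P, |f₂ ω| ≤ 1)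
    (hg₁' : ∀ᵐ ω ∂P, |g₁ ω| ≤ 1) (hg₂' : ∀ᵐ ω ∂P, |g₂ ω| ≤ 1) :
    |∫ ω, f₁ ω * g₁ ω ∂P - ∫ ω, f₂ ω * g₁ ω ∂P + ∫ ω, f₁ ω * g₂ ω ∂P
      + ∫ ω, f₂ ω * g₂ ω ∂P| ≤ 2 := by
  have hint : ∀ {f g : Ω → ℝ}, AEStronglyMeasurable f P → AEStronglyMeasurable g P →
      (∀ᵐ ω ∂P, |f ω| ≤ 1) → (∀ᵐ ω ∂P, |g ω| ≤ 1) → Integrable (fun ω => f ω * g ω) P := by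
    intro f g hf hg hf' hg'
    refine (integrable_const (1 : ℝ)).mono' (hf.mul hg) ?_
    filter_upwards [hf', hg'] with ω h₁ h₂
    rw [Real.norm_eq_abs, abs_mul]
    nlinarith [abs_nonneg (f ω), abs_nonneg (g ω)]
  have i₁₁ := hint hf₁ hg₁ hf₁' hg₁'
  have i₂₁ := hint hf₂ hg₁ hf₂' hg₁'
  have i₁₂ := hint hf₁ hg₂ hf₁' hg₂'
  have i₂₂ := hint hf₂ hg₂ hf₂' hg₂'
  have hsum : ∫ ω, f₁ ω * g₁ ω ∂P - ∫ ω, f₂ ω * g₁ ω ∂P + ∫ ω, f₁ ω * g₂ ω ∂P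
      + ∫ ω, f₂ ω * g₂ ω ∂P
      = ∫ ω, (f₁ ω * g₁ ω - f₂ ω * g₁ ω + f₁ ω * g₂ ω + f₂ ω * g₂ ω) ∂P := by
    rw [integral_add _ i₂₂, integral_add _ i₁₂, integral_sub i₁₁ i₂₁]
    exacts [i₁₁.sub i₂₁, (i₁₁.sub i₂₁).add i₁₂]
  rw [hsum]
  have hbound : ∀ᵐ ω ∂P, ‖f₁ ω * g₁ ω - f₂ ω * g₁ ω + f₁ ω * g₂ ω + f₂ ω * g₂ ω‖ ≤ 2 := by
    filter_upwards [hf₁', hf₂', hg₁', hg₂'] with ω h₁ h₂ h₃ h₄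
    exact abs_chsh_le_two h₁ h₂ h₃ h₄
  simpa using norm_integral_le_of_norm_le_const hbound

/-- A `{-1, 0, 1}`-valued function is a difference of two indicators, so the factorisation
of conditional probabilities extends to such functions by bilinearity. -/
theorem condExp_mul_ae_eq_of_cprob_inter [IsFiniteMeasure P] (hm₁ : m₁ ≤ mΩ) (hm₂ : m₂ ≤ mΩ)
    (hloc : ∀ E₁ E₂, MeasurableSet[m₁] E₁ → MeasurableSet[m₂] E₂ →
      cprob P m (E₁ ∩ E₂) =ᵐ[P] fun ω => cprob P m E₁ ω * cprob P m E₂ ω)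
    {F G : Ω → ℝ} (hF : Measurable[m₁] F) (hG : Measurable[m₂] G)
    (hFv : ∀ ω, F ω = -1 ∨ F ω = 0 ∨ F ω = 1) (hGv : ∀ ω, G ω = -1 ∨ G ω = 0 ∨ G ω = 1) :
    P[F * G | m] =ᵐ[P] P[F | m] * P[G | m] := by
  rw [eq_indicator_sub_indicator_of_trichotomy hFv, eq_indicator_sub_indicator_of_trichotomy hGv]
  set U₁ := F ⁻¹' {1}
  set U₂ := F ⁻¹' {-1}
  set V₁ := G ⁻¹' {1}
  set V₂ := G ⁻¹' {-1}
  have hU₁ : MeasurableSet[m₁] U₁ := hF (measurableSet_singleton _)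
  have hU₂ : MeasurableSet[m₁] U₂ := hF (measurableSet_singleton _)
  have hV₁ : MeasurableSet[m₂] V₁ := hG (measurableSet_singleton _)
  have hV₂ : MeasurableSet[m₂] V₂ := hG (measurableSet_singleton _)
  have hint : ∀ E, MeasurableSet[mΩ] E → Integrable (E.indicator fun _ => (1 : ℝ)) P :=
    fun E hE => (integrable_const 1).indicator hE
  have hexpand : (U₁.indicator (fun _ => (1 : ℝ)) - U₂.indicator fun _ => 1) *
      (V₁.indicator (fun _ => 1) - V₂.indicator fun _ => 1) =
      (U₁ ∩ V₁).indicator (fun _ => 1) - (U₁ ∩ V₂).indicator (fun _ => 1)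
        - ((U₂ ∩ V₁).indicator (fun _ => 1) - (U₂ ∩ V₂).indicator fun _ => 1) := by
    simp only [← Pi.one_def, Set.inter_indicator_one]
    ring
  rw [hexpand]
  have iU₁V₁ := hint _ ((hm₁ _ hU₁).inter (hm₂ _ hV₁))
  have iU₁V₂ := hint _ ((hm₁ _ hU₁).inter (hm₂ _ hV₂))
  have iU₂V₁ := hint _ ((hm₁ _ hU₂).inter (hm₂ _ hV₁))
  have iU₂V₂ := hint _ ((hm₁ _ hU₂).inter (hm₂ _ hV₂))
  filter_upwards [condExp_sub (m := m) (iU₁V₁.sub iU₁V₂) (iU₂V₁.sub iU₂V₂),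
    condExp_sub (m := m) iU₁V₁ iU₁V₂, condExp_sub (m := m) iU₂V₁ iU₂V₂,
    condExp_sub (m := m) (hint _ (hm₁ _ hU₁)) (hint _ (hm₁ _ hU₂)),
    condExp_sub (m := m) (hint _ (hm₂ _ hV₁)) (hint _ (hm₂ _ hV₂)),
    hloc _ _ hU₁ hV₁, hloc _ _ hU₁ hV₂, hloc _ _ hU₂ hV₁, hloc _ _ hU₂ hV₂]
    with ω h h₁ h₂ hU hV l₁₁ l₁₂ l₂₁ l₂₂
  unfold cprob at l₁₁ l₁₂ l₂₁ l₂₂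
  simp only [Pi.sub_apply, Pi.mul_apply] at h h₁ h₂ hU hV ⊢
  rw [h, h₁, h₂, hU, hV, l₁₁, l₁₂, l₂₁, l₂₂]
  ring

/-- When `S` is independent of `m`, this is `P[S.indicator D | m] / P[S.indicator 1 | m]`,
the conditional expectation `E[D | m, S]` of `D` given `m` on the event `S`. -/
noncomputable def localExpectation (P : Measure Ω) (m : MeasurableSpace Ω) (D : Ω → ℝ)
    (S : Set Ω) : Ω → ℝ :=
  fun ω => (P.real S)⁻¹ * P[S.indicator D | m] ω

lemma aestronglyMeasurable_localExpectation (hm : m ≤ mΩ) (D : Ω → ℝ) (S : Set Ω) :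
    AEStronglyMeasurable (localExpectation P m D S) P :=
  ((stronglyMeasurable_condExp.mono hm).const_mul _).aestronglyMeasurable

lemma condExp_indicator_preimage_ae_eq [IsFiniteMeasure P] {α β : Type*} [MeasurableSpace α]
    [MeasurableSpace β] {A : Ω → α} {lam : Ω → β} (hA : Measurable A) (hlam : Measurable lam)
    (hind : IndepFun A lam P) {s : Set α} (hs : MeasurableSet s) :
    P[(A ⁻¹' s).indicator (fun _ => 1) | MeasurableSpace.comap lam inferInstance]
      =ᵐ[P] fun _ => P.real (A ⁻¹' s) := by
  refine (condExp_indep_eq hA.comap_le hlam.comap_le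
    (stronglyMeasurable_const.indicator ⟨s, hs, rfl⟩) hind).trans ?_
  filter_upwards with ω
  exact integral_indicator_one (hA hs)

lemma abs_localExpectation_le_one [IsFiniteMeasure P] {α β : Type*} [MeasurableSpace α]
    [MeasurableSpace β] {A : Ω → α} {lam : Ω → β} (hA : Measurable A) (hlam : Measurable lam)
    (hind : IndepFun A lam P) {s : Set α} (hs : MeasurableSet s) {D : Ω → ℝ}
    (hD : ∀ ω, D ω = 1 ∨ D ω = -1) :
    ∀ᵐ ω ∂P, |localExpectation P (MeasurableSpace.comap lam inferInstance) D (A ⁻¹' s) ω| ≤ 1 := by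
  have habs : |(A ⁻¹' s).indicator D| = (A ⁻¹' s).indicator (fun _ => 1) := by
    funext ω
    by_cases hω : ω ∈ A ⁻¹' s <;> rcases hD ω with h | h <;> simp [hω, h]
  filter_upwards [abs_condExp_ae_le_condExp_abs (μ := P)
      (m := MeasurableSpace.comap lam inferInstance) ((A ⁻¹' s).indicator D),
    condExp_indicator_preimage_ae_eq hA hlam hind hs] with ω h₁ h₂
  rw [habs] at h₁
  exact abs_inv_mul_le_one_of_abs_le (h₁.trans h₂.le)

lemma integral_cond_inter_eq_integral_localExpectation_mul [IsFiniteMeasure P] (hm : m ≤ mΩ)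
    {S T : Set Ω} (hS : MeasurableSet S) (hT : MeasurableSet T) (hST : P (S ∩ T) = P S * P T)
    {D₁ D₂ : Ω → ℝ}
    (hfac : P[S.indicator D₁ * T.indicator D₂ | m]
      =ᵐ[P] P[S.indicator D₁ | m] * P[T.indicator D₂ | m]) :
    ∫ ω, D₁ ω * D₂ ω ∂P[|S ∩ T]
      = ∫ ω, localExpectation P m D₁ S ω * localExpectation P m D₂ T ω ∂P := by
  have hreal : P.real (S ∩ T) = P.real S * P.real T := by
    simp only [measureReal_def, hST, ENNReal.toReal_mul]
  have hind : (S ∩ T).indicator (fun ω => D₁ ω * D₂ ω) = S.indicator D₁ * T.indicator D₂ :=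
    funext (Set.inter_indicator_mul D₁ D₂)
  rw [integral_cond_eq_inv_mul_integral_indicator (hS.inter hT), hind, ← integral_condExp hm,
    integral_congr_ae hfac, hreal, mul_inv, ← integral_const_mul]
  congr 1
  funext ω
  simp only [localExpectation, Pi.mul_apply]
  ring

end

theorem stmt4_general {Ω : Type*} [MeasurableSpace Ω] (P : Measure Ω) [IsProbabilityMeasure P]
    {Λ : Type*} [MeasurableSpace Λ] (lam : Ω → Λ) (hlam : Measurable lam)
    (A B : Ω → Bool) (hA : Measurable A) (hB : Measurable B)
    (D1 D2 : Ω → ℝ) (hD1 : Measurable D1) (hD2 : Measurable D2)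
    (hD1v : ∀ ω, D1 ω = 1 ∨ D1 ω = -1) (hD2v : ∀ ω, D2 ω = 1 ∨ D2 ω = -1)
    (hE1 : IndepFun A B P)
    (hE3 : IndepFun A lam P ∧ IndepFun B lam P)
    (hLOC : ∀ E1 E2 : Set Ω,
      MeasurableSet[MeasurableSpace.comap (fun ω => (D1 ω, A ω)) inferInstance] E1 →
      MeasurableSet[MeasurableSpace.comap (fun ω => (D2 ω, B ω)) inferInstance] E2 →
      cprob P (MeasurableSpace.comap lam inferInstance) (E1 ∩ E2) =ᵐ[P]
        fun ω => cprob P (MeasurableSpace.comap lam inferInstance) E1 ω *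
          cprob P (MeasurableSpace.comap lam inferInstance) E2 ω) :
    |(∫ ω, D1 ω * D2 ω ∂(P[|{ω | A ω = true} ∩ {ω | B ω = true}]))
      - (∫ ω, D1 ω * D2 ω ∂(P[|{ω | A ω = false} ∩ {ω | B ω = true}]))
      + (∫ ω, D1 ω * D2 ω ∂(P[|{ω | A ω = true} ∩ {ω | B ω = false}]))
      + (∫ ω, D1 ω * D2 ω ∂(P[|{ω | A ω = false} ∩ {ω | B ω = false}]))| ≤ 2 := by
  have hm : MeasurableSpace.comap lam inferInstance ≤ ‹MeasurableSpace Ω› := hlam.comap_le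
  have hcorr : ∀ x y : Bool, ∫ ω, D1 ω * D2 ω ∂(P[|{ω | A ω = x} ∩ {ω | B ω = y}])
      = ∫ ω, localExpectation P (MeasurableSpace.comap lam inferInstance) D1 {ω | A ω = x} ω *
          localExpectation P (MeasurableSpace.comap lam inferInstance) D2 {ω | B ω = y} ω ∂P := by
    intro x y
    refine integral_cond_inter_eq_integral_localExpectation_mul hm
      (hA (measurableSet_singleton x)) (hB (measurableSet_singleton y))
      (hE1.measure_inter_preimage_eq_mul _ _ (measurableSet_singleton x)
        (measurableSet_singleton y)) ?_
    exact condExp_mul_ae_eq_of_cprob_inter (hD1.prodMk hA).comap_le (hD2.prodMk hB).comap_le hLOC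
      (measurable_comap_prodMk_indicator D1 A x) (measurable_comap_prodMk_indicator D2 B y)
      (indicator_eq_neg_one_or_zero_or_one hD1v _) (indicator_eq_neg_one_or_zero_or_one hD2v _)
  rw [hcorr, hcorr, hcorr, hcorr]
  have hmeas := aestronglyMeasurable_localExpectation (P := P) hm
  exact abs_integral_chsh_le_two (hmeas _ _) (hmeas _ _) (hmeas _ _) (hmeas _ _)
    (abs_localExpectation_le_one hA hlam hE3.1 (measurableSet_singleton true) hD1v)
    (abs_localExpectation_le_one hA hlam hE3.1 (measurableSet_singleton false) hD1v)
    (abs_localExpectation_le_one hB hlam hE3.2 (measurableSet_singleton true) hD2v)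
    (abs_localExpectation_le_one hB hlam hE3.2 (measurableSet_singleton false) hD2v)

/-- CHSH inequality: under (E1), (E2), (E3) and locality (LOC),
`|E_{ab}(D1D2) − E_{a′b}(D1D2) + E_{ab′}(D1D2) + E_{a′b′}(D1D2)| ≤ 2`,
where `E_{xy}(D1D2)` is the expectation of `D1·D2` conditioned on the event
`{A = x} ∩ {B = y}`.  Settings `a, a′` are modelled by `true, false : Bool`
(likewise `b, b′`). -/
theorem stmt4 {Ω : Type*} [MeasurableSpace Ω] (P : Measure Ω) [IsProbabilityMeasure P]
    {Λ : Type*} [MeasurableSpace Λ] (lam : Ω → Λ) (hlam : Measurable lam)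
    (A B : Ω → Bool) (hA : Measurable A) (hB : Measurable B)
    (D1 D2 : Ω → ℝ) (hD1 : Measurable D1) (hD2 : Measurable D2)
    (hD1v : ∀ ω, D1 ω = 1 ∨ D1 ω = -1) (hD2v : ∀ ω, D2 ω = 1 ∨ D2 ω = -1)
    (hE1 : IndepFun A B P)
    (hE2 : 0 < P {ω | A ω = true} ∧ 0 < P {ω | A ω = false} ∧
           0 < P {ω | B ω = true} ∧ 0 < P {ω | B ω = false})
    (hE3 : IndepFun A lam P ∧ IndepFun B lam P)
    (hLOC : ∀ E1 E2 : Set Ω,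
      MeasurableSet[MeasurableSpace.comap (fun ω => (D1 ω, A ω)) inferInstance] E1 →
      MeasurableSet[MeasurableSpace.comap (fun ω => (D2 ω, B ω)) inferInstance] E2 →
      cprob P (MeasurableSpace.comap lam inferInstance) (E1 ∩ E2) =ᵐ[P]
        fun ω => cprob P (MeasurableSpace.comap lam inferInstance) E1 ω *
          cprob P (MeasurableSpace.comap lam inferInstance) E2 ω) :
    |(∫ ω, D1 ω * D2 ω ∂(P[|{ω | A ω = true} ∩ {ω | B ω = true}]))
      - (∫ ω, D1 ω * D2 ω ∂(P[|{ω | A ω = false} ∩ {ω | B ω = true}]))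
      + (∫ ω, D1 ω * D2 ω ∂(P[|{ω | A ω = true} ∩ {ω | B ω = false}]))
      + (∫ ω, D1 ω * D2 ω ∂(P[|{ω | A ω = false} ∩ {ω | B ω = false}]))| ≤ 2 :=
  stmt4_general P lam hlam A B hA hB D1 D2 hD1 hD2 hD1v hD2v hE1 hE3 hLOC
end

section
/- Define the random variable C by C := D1·D2 if (A, B) ≠ (a′, b) and C := −D1·D2 if (A, B) = (a′, b). Under assumptions (E1) and (E2*), and the locality assumption (LOC) together with (E3), one has P(C = +1) ≤ 3/4, or equivalently E(C) ≤ 1/2. -/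
/-!
Given the hidden state `λ`, let `u_x = P(D1 = 1, A = x | λ) - P(D1 = -1, A = x | λ)` and define
`v_y` likewise for the second wing. Since `A` is independent of `λ`, `|u_x| ≤ P(A = x | λ) = 1/2`,
and similarly `|v_y| ≤ 1/2`. Locality makes `E[C | λ]` bilinear in these local quantities:
`E[C | λ] = u_a v_b + u_a v_b′ - u_a′ v_b + u_a′ v_b′`, which is at most `1/2` by the CHSH
inequality for numbers bounded by `1/2`. Averaging over `λ` gives `E(C) ≤ 1/2`, and since `C = ±1`,
`P(C = 1) = (1 + E(C)) / 2 ≤ 3/4`.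
-/

open MeasureTheory ProbabilityTheory
open scoped ENNReal

section CondProb

variable {Ω : Type*} {m m' mΩ : MeasurableSpace Ω} {P : Measure Ω}

lemma cprob_nonneg (E : Set Ω) : 0 ≤ᵐ[P] cprob P m E :=
  condExp_nonneg (ae_of_all _ fun _ => Set.indicator_nonneg (fun _ _ => zero_le_one) _)

variable [IsFiniteMeasure P]

lemma integrable_indicator_one {E : Set Ω} (hE : MeasurableSet E) :
    Integrable (E.indicator fun _ => (1 : ℝ)) P :=
  (integrable_const 1).indicator hE

lemma cprob_union {E F : Set Ω} (hE : MeasurableSet E) (hF : MeasurableSet F)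
    (hEF : Disjoint E F) : cprob P m (E ∪ F) =ᵐ[P] cprob P m E + cprob P m F := by
  rw [cprob, Set.indicator_union_of_disjoint hEF]
  exact condExp_add (integrable_indicator_one hE) (integrable_indicator_one hF) m

lemma ae_abs_cprob_sub_cprob_le {E F : Set Ω} (hE : MeasurableSet E) (hF : MeasurableSet F)
    (hEF : Disjoint E F) :
    ∀ᵐ ω ∂P, |cprob P m E ω - cprob P m F ω| ≤ cprob P m (E ∪ F) ω := by
  filter_upwards [cprob_nonneg (P := P) (m := m) E, cprob_nonneg (P := P) (m := m) F,
    cprob_union (m := m) hE hF hEF] with ω hE₀ hF₀ hunion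
  rw [Pi.zero_apply] at hE₀ hF₀
  rw [hunion, Pi.add_apply, abs_le]
  constructor <;> linarith

lemma cprob_eq_measureReal_of_indep (hm' : m' ≤ mΩ) (hm : m ≤ mΩ)
    {E : Set Ω} (hE : MeasurableSet[m'] E) (hind : Indep m' m P) :
    cprob P m E =ᵐ[P] fun _ => P.real E := by
  refine (condExp_indep_eq hm' hm (stronglyMeasurable_const.indicator hE) hind).trans ?_
  simp only [integral_indicator (hm' _ hE), setIntegral_const, smul_eq_mul, mul_one]
  rfl

end CondProb

section Locality

variable {Ω : Type*} {m m₁ m₂ mΩ : MeasurableSpace Ω} {P : Measure Ω} [IsFiniteMeasure P]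

lemma condExp_indicator_sub_mul_indicator_sub (hm₁ : m₁ ≤ mΩ) (hm₂ : m₂ ≤ mΩ)
    (hloc : ∀ E₁ E₂, MeasurableSet[m₁] E₁ → MeasurableSet[m₂] E₂ →
      cprob P m (E₁ ∩ E₂) =ᵐ[P] fun ω => cprob P m E₁ ω * cprob P m E₂ ω)
    {E F G H : Set Ω} (hE : MeasurableSet[m₁] E) (hF : MeasurableSet[m₁] F)
    (hG : MeasurableSet[m₂] G) (hH : MeasurableSet[m₂] H) :
    P[fun ω => (E.indicator (fun _ => (1 : ℝ)) ω - F.indicator (fun _ => 1) ω) *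
        (G.indicator (fun _ => 1) ω - H.indicator (fun _ => 1) ω) | m] =ᵐ[P]
      fun ω => (cprob P m E ω - cprob P m F ω) * (cprob P m G ω - cprob P m H ω) := by
  have hint : ∀ {S T : Set Ω}, MeasurableSet[m₁] S → MeasurableSet[m₂] T →
      Integrable ((S ∩ T).indicator fun _ => (1 : ℝ)) P :=
    fun hS hT => integrable_indicator_one ((hm₁ _ hS).inter (hm₂ _ hT))
  have hexpand : (fun ω => (E.indicator (fun _ => (1 : ℝ)) ω - F.indicator (fun _ => 1) ω) *
      (G.indicator (fun _ => 1) ω - H.indicator (fun _ => 1) ω)) =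
      (E ∩ G).indicator (fun _ => 1) - (E ∩ H).indicator (fun _ => 1) -
        (F ∩ G).indicator (fun _ => 1) + (F ∩ H).indicator (fun _ => 1) := by
    ext ω
    simp only [Set.indicator, Set.mem_inter_iff, Pi.add_apply, Pi.sub_apply]
    split_ifs <;> simp_all
  rw [hexpand]
  filter_upwards [condExp_add (((hint hE hG).sub (hint hE hH)).sub (hint hF hG)) (hint hF hH) m,
    condExp_sub ((hint hE hG).sub (hint hE hH)) (hint hF hG) m,
    condExp_sub (hint hE hG) (hint hE hH) m,
    hloc _ _ hE hG, hloc _ _ hE hH, hloc _ _ hF hG, hloc _ _ hF hH] with ω h₁ h₂ h₃ hEG hEH hFG hFH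
  simp only [Pi.add_apply, Pi.sub_apply] at h₁ h₂ h₃
  simp only [cprob] at hEG hEH hFG hFH ⊢
  rw [h₁, h₂, h₃, hEG, hEH, hFG, hFH]
  ring

end Locality

lemma indicator_eq_indicator_one_sub {Ω β : Type*} {D : Ω → ℝ}
    (hDv : ∀ ω, D ω = 1 ∨ D ω = -1) (X : Ω → β) (x : β) (ω : Ω) :
    {ω | X ω = x}.indicator D ω = {ω | D ω = 1 ∧ X ω = x}.indicator (fun _ => 1) ω -
      {ω | D ω = -1 ∧ X ω = x}.indicator (fun _ => 1) ω := by
  rcases hDv ω with h | h <;> by_cases hx : X ω = x <;>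
    norm_num [Set.indicator, h, hx]

/-- For `±1`-valued `D` this is a version of `P[{X = x}.indicator D | m]`. -/
noncomputable def condOutcome {Ω β : Type*} [mΩ : MeasurableSpace Ω] (P : Measure Ω)
    (m : MeasurableSpace Ω) (D : Ω → ℝ) (X : Ω → β) (x : β) : Ω → ℝ :=
  @cprob _ mΩ P m {ω | D ω = 1 ∧ X ω = x} - @cprob _ mΩ P m {ω | D ω = -1 ∧ X ω = x}

section Outcomes

variable {Ω β γ : Type*} [MeasurableSpace β] [MeasurableSingletonClass β]
  [MeasurableSpace γ] [MeasurableSingletonClass γ] {m mΩ : MeasurableSpace Ω} {P : Measure Ω}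

lemma measurableSet_comap_prodMk_setOf_eq (D : Ω → ℝ) (X : Ω → β) (s : ℝ) (x : β) :
    MeasurableSet[MeasurableSpace.comap (fun ω => (D ω, X ω)) inferInstance]
      {ω | D ω = s ∧ X ω = x} :=
  ⟨{(s, x)}, measurableSet_singleton _, by ext; simp⟩

variable [IsFiniteMeasure P]

lemma condExp_indicator_mul_indicator_of_local {D₁ D₂ : Ω → ℝ} {X₁ : Ω → β} {X₂ : Ω → γ}
    (hD₁ : Measurable D₁) (hD₂ : Measurable D₂) (hX₁ : Measurable X₁) (hX₂ : Measurable X₂)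
    (hD₁v : ∀ ω, D₁ ω = 1 ∨ D₁ ω = -1) (hD₂v : ∀ ω, D₂ ω = 1 ∨ D₂ ω = -1)
    (hloc : ∀ E₁ E₂ : Set Ω,
      MeasurableSet[MeasurableSpace.comap (fun ω => (D₁ ω, X₁ ω)) inferInstance] E₁ →
      MeasurableSet[MeasurableSpace.comap (fun ω => (D₂ ω, X₂ ω)) inferInstance] E₂ →
      cprob P m (E₁ ∩ E₂) =ᵐ[P] fun ω => cprob P m E₁ ω * cprob P m E₂ ω) (x : β) (y : γ) :
    P[fun ω => {ω | X₁ ω = x}.indicator D₁ ω * {ω | X₂ ω = y}.indicator D₂ ω | m] =ᵐ[P]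
      fun ω => condOutcome P m D₁ X₁ x ω * condOutcome P m D₂ X₂ y ω := by
  simp only [indicator_eq_indicator_one_sub hD₁v, indicator_eq_indicator_one_sub hD₂v,
    condOutcome, Pi.sub_apply]
  exact condExp_indicator_sub_mul_indicator_sub (Measurable.comap_le (by fun_prop))
    (Measurable.comap_le (by fun_prop)) hloc (measurableSet_comap_prodMk_setOf_eq _ _ _ _)
    (measurableSet_comap_prodMk_setOf_eq _ _ _ _) (measurableSet_comap_prodMk_setOf_eq _ _ _ _)
    (measurableSet_comap_prodMk_setOf_eq _ _ _ _)

lemma ae_abs_condOutcome_le {D : Ω → ℝ} {X : Ω → β}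
    (hD : Measurable D) (hX : Measurable X) (hDv : ∀ ω, D ω = 1 ∨ D ω = -1) (hm : m ≤ mΩ)
    (hind : Indep (MeasurableSpace.comap X inferInstance) m P) (x : β) :
    ∀ᵐ ω ∂P, |condOutcome P m D X x ω| ≤ P.real {ω | X ω = x} := by
  have hset : ∀ s, MeasurableSet {ω | D ω = s ∧ X ω = x} := fun s =>
    (hD (measurableSet_singleton s)).inter (hX (measurableSet_singleton x))
  have hunion : {ω | D ω = 1 ∧ X ω = x} ∪ {ω | D ω = -1 ∧ X ω = x} = {ω | X ω = x} := by
    ext ω; rcases hDv ω with h | h <;> simp [h]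
  have hdisj : Disjoint {ω | D ω = 1 ∧ X ω = x} {ω | D ω = -1 ∧ X ω = x} :=
    Set.disjoint_left.2 fun ω h₁ h₂ => by norm_num [h₁.1] at h₂
  filter_upwards [ae_abs_cprob_sub_cprob_le (m := m) (hset 1) (hset (-1)) hdisj,
    cprob_eq_measureReal_of_indep hX.comap_le hm ⟨{x}, measurableSet_singleton x, rfl⟩ hind]
    with ω hle heq
  rw [hunion] at hle
  exact hle.trans_eq heq

end Outcomes

lemma chsh_le {a b u₁ u₂ v₁ v₂ : ℝ} (hu₁ : |u₁| ≤ a) (hu₂ : |u₂| ≤ a)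
    (hv₁ : |v₁| ≤ b) (hv₂ : |v₂| ≤ b) :
    u₁ * v₁ + u₁ * v₂ - u₂ * v₁ + u₂ * v₂ ≤ 2 * a * b := by
  have hsum : |v₁ + v₂| + |v₂ - v₁| ≤ 2 * b := by
    rcases abs_cases v₁ with h₁ | h₁ <;> rcases abs_cases v₂ with h₂ | h₂ <;>
      rcases abs_cases (v₁ + v₂) with h₃ | h₃ <;> rcases abs_cases (v₂ - v₁) with h₄ | h₄ <;>
      linarith
  calc u₁ * v₁ + u₁ * v₂ - u₂ * v₁ + u₂ * v₂ = u₁ * (v₁ + v₂) + u₂ * (v₂ - v₁) := by ring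
    _ ≤ |u₁| * |v₁ + v₂| + |u₂| * |v₂ - v₁| :=
      add_le_add ((le_abs_self _).trans (abs_mul _ _).le) ((le_abs_self _).trans (abs_mul _ _).le)
    _ ≤ a * |v₁ + v₂| + a * |v₂ - v₁| := by gcongr
    _ ≤ 2 * a * b := by nlinarith [(abs_nonneg u₁).trans hu₁]

def chshSign (x y : Bool) : ℝ := if x = false ∧ y = true then -1 else 1

lemma sum_chshSign_mul_le {a b : ℝ} {u v : Bool → ℝ} (hu : ∀ x, |u x| ≤ a)
    (hv : ∀ y, |v y| ≤ b) :
    ∑ p : Bool × Bool, chshSign p.1 p.2 * (u p.1 * v p.2) ≤ 2 * a * b := by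
  have := chsh_le (hu true) (hu false) (hv true) (hv false)
  simp only [Fintype.sum_prod_type, Fintype.sum_bool, chshSign]
  norm_num
  linarith

lemma chshSign_mul_eq_sum {Ω : Type*} (A B : Ω → Bool) (D₁ D₂ : Ω → ℝ) (ω : Ω) :
    chshSign (A ω) (B ω) * (D₁ ω * D₂ ω) = ∑ p : Bool × Bool,
      chshSign p.1 p.2 * ({ω | A ω = p.1}.indicator D₁ ω * {ω | B ω = p.2}.indicator D₂ ω) := by
  cases hA : A ω <;> cases hB : B ω <;>
    simp [Fintype.sum_prod_type, Set.indicator_apply, hA, hB]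

section Probability

variable {Ω : Type*} [MeasurableSpace Ω] {P : Measure Ω} [IsProbabilityMeasure P]

lemma measureReal_eq_half {X : Ω → Bool} (hX : Measurable X) (h : P {ω | X ω = true} = 1 / 2)
    (x : Bool) : P.real {ω | X ω = x} = 1 / 2 := by
  have htrue : P.real {ω | X ω = true} = 1 / 2 := by simp [measureReal_def, h]
  have hmeas : MeasurableSet {ω | X ω = true} := hX (measurableSet_singleton true)
  cases x
  · have hcompl : {ω | X ω = false} = {ω | X ω = true}ᶜ := by ext; simp
    rw [hcompl, measureReal_compl hmeas, probReal_univ, htrue]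
    norm_num
  · exact htrue

lemma ae_abs_condOutcome_le_half {Λ : Type*} [MeasurableSpace Λ] {lam : Ω → Λ}
    (hlam : Measurable lam) {D : Ω → ℝ} {X : Ω → Bool} (hD : Measurable D) (hX : Measurable X)
    (hDv : ∀ ω, D ω = 1 ∨ D ω = -1) (hX_half : P {ω | X ω = true} = 1 / 2)
    (hind : IndepFun X lam P) (x : Bool) :
    ∀ᵐ ω ∂P, |condOutcome P (.comap lam inferInstance) D X x ω| ≤ 1 / 2 := by
  simpa only [measureReal_eq_half hX hX_half] using
    ae_abs_condOutcome_le hD hX hDv hlam.comap_le ((IndepFun_iff_Indep _ _ _).1 hind) x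

lemma integral_eq_two_mul_measureReal_sub_one {C : Ω → ℝ} (hC : Measurable C)
    (hCv : ∀ ω, C ω = 1 ∨ C ω = -1) : ∫ ω, C ω ∂P = 2 * P.real {ω | C ω = 1} - 1 := by
  have hset : MeasurableSet {ω | C ω = 1} := hC (measurableSet_singleton 1)
  have hC_eq : ∀ ω, C ω = 2 * {ω | C ω = 1}.indicator (fun _ => (1 : ℝ)) ω - 1 := fun ω => by
    rcases hCv ω with h | h <;> norm_num [Set.indicator, h]
  rw [integral_congr_ae (ae_of_all _ hC_eq),
    integral_sub ((integrable_indicator_one hset).const_mul 2) (integrable_const 1),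
    integral_const_mul, integral_indicator_const _ hset]
  simp

lemma measure_eq_one_le_three_quarters {C : Ω → ℝ} (hC : Measurable C)
    (hCv : ∀ ω, C ω = 1 ∨ C ω = -1) (hint : ∫ ω, C ω ∂P ≤ 1 / 2) : P {ω | C ω = 1} ≤ 3 / 4 := by
  have hP : P.real {ω | C ω = 1} ≤ 3 / 4 := by
    linarith [integral_eq_two_mul_measureReal_sub_one (P := P) hC hCv]
  rw [← ofReal_measureReal]
  exact ENNReal.ofReal_le_of_le_toReal (by norm_num [ENNReal.toReal_div]; linarith)

end Probability

section Chsh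

variable {Ω : Type*} {m mΩ : MeasurableSpace Ω} {P : Measure Ω} [IsFiniteMeasure P]

lemma condExp_chshSign_mul_of_local {A B : Ω → Bool} {D₁ D₂ : Ω → ℝ} (hA : Measurable A)
    (hB : Measurable B) (hD₁ : Measurable D₁) (hD₂ : Measurable D₂)
    (hD₁v : ∀ ω, D₁ ω = 1 ∨ D₁ ω = -1) (hD₂v : ∀ ω, D₂ ω = 1 ∨ D₂ ω = -1)
    (hloc : ∀ E₁ E₂ : Set Ω,
      MeasurableSet[MeasurableSpace.comap (fun ω => (D₁ ω, A ω)) inferInstance] E₁ →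
      MeasurableSet[MeasurableSpace.comap (fun ω => (D₂ ω, B ω)) inferInstance] E₂ →
      cprob P m (E₁ ∩ E₂) =ᵐ[P] fun ω => cprob P m E₁ ω * cprob P m E₂ ω) :
    P[fun ω => chshSign (A ω) (B ω) * (D₁ ω * D₂ ω) | m] =ᵐ[P] fun ω => ∑ p : Bool × Bool,
      chshSign p.1 p.2 * (condOutcome P m D₁ A p.1 ω * condOutcome P m D₂ B p.2 ω) := by
  set f : Bool × Bool → Ω → ℝ := fun p ω =>
    {ω | A ω = p.1}.indicator D₁ ω * {ω | B ω = p.2}.indicator D₂ ω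
  have hf_bound : ∀ p ω, ‖f p ω‖ ≤ 1 := fun p ω => by
    rcases hD₁v ω with h₁ | h₁ <;> rcases hD₂v ω with h₂ | h₂ <;>
      by_cases hx : A ω = p.1 <;> by_cases hy : B ω = p.2 <;>
      norm_num [f, Set.indicator, h₁, h₂, hx, hy]
  have hf_meas : ∀ p, Measurable (f p) := fun p =>
    (hD₁.indicator (hA (measurableSet_singleton _))).mul
      (hD₂.indicator (hB (measurableSet_singleton _)))
  have hf_int : ∀ p, Integrable (chshSign p.1 p.2 • f p) P := fun p =>
    (Integrable.of_bound (hf_meas p).aestronglyMeasurable 1 (ae_of_all _ (hf_bound p))).smul _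
  have hsum : (fun ω => chshSign (A ω) (B ω) * (D₁ ω * D₂ ω)) =
      ∑ p : Bool × Bool, chshSign p.1 p.2 • f p := by
    ext ω
    simp only [chshSign_mul_eq_sum, Finset.sum_apply, Pi.smul_apply, smul_eq_mul, f]
  have hterms : ∀ᵐ ω ∂P, ∀ p : Bool × Bool, P[chshSign p.1 p.2 • f p | m] ω =
      chshSign p.1 p.2 * (condOutcome P m D₁ A p.1 ω * condOutcome P m D₂ B p.2 ω) :=
    ae_all_iff.2 fun p => by
      filter_upwards [condExp_smul (chshSign p.1 p.2) (f p) m,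
        condExp_indicator_mul_indicator_of_local hD₁ hD₂ hA hB hD₁v hD₂v hloc p.1 p.2]
        with ω h₁ h₂
      rw [h₁, Pi.smul_apply, h₂, smul_eq_mul]
  rw [hsum]
  filter_upwards [condExp_finsetSum (fun p _ => hf_int p) m, hterms] with ω h₁ h₂
  rw [h₁, Finset.sum_apply]
  exact Finset.sum_congr rfl fun p _ => h₂ p

end Chsh

/-- Settings `a, a′` are modelled by `true, false : Bool` (likewise `b, b′`), so `(A,B) = (a′,b)`
reads `A ω = false ∧ B ω = true`. -/
theorem stmt7_general {Ω : Type*} [MeasurableSpace Ω] (P : Measure Ω) [IsProbabilityMeasure P]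
    {Λ : Type*} [MeasurableSpace Λ] (lam : Ω → Λ) (hlam : Measurable lam)
    (A B : Ω → Bool) (hA : Measurable A) (hB : Measurable B)
    (D1 D2 : Ω → ℝ) (hD1 : Measurable D1) (hD2 : Measurable D2)
    (hD1v : ∀ ω, D1 ω = 1 ∨ D1 ω = -1) (hD2v : ∀ ω, D2 ω = 1 ∨ D2 ω = -1)
    (hE2 : P {ω | A ω = true} = 1/2 ∧ P {ω | B ω = true} = 1/2)
    (hE3 : IndepFun A lam P ∧ IndepFun B lam P)
    (hLOC : ∀ E1 E2 : Set Ω,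
      MeasurableSet[MeasurableSpace.comap (fun ω => (D1 ω, A ω)) inferInstance] E1 →
      MeasurableSet[MeasurableSpace.comap (fun ω => (D2 ω, B ω)) inferInstance] E2 →
      cprob P (MeasurableSpace.comap lam inferInstance) (E1 ∩ E2) =ᵐ[P]
        fun ω => cprob P (MeasurableSpace.comap lam inferInstance) E1 ω *
          cprob P (MeasurableSpace.comap lam inferInstance) E2 ω)
    (C : Ω → ℝ)
    (hC : ∀ ω, C ω = if A ω = false ∧ B ω = true
        then -(D1 ω * D2 ω) else D1 ω * D2 ω) :
    P {ω | C ω = 1} ≤ 3/4 ∧ ∫ ω, C ω ∂P ≤ 1/2 := by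
  have hC_eq : C = fun ω => chshSign (A ω) (B ω) * (D1 ω * D2 ω) := by
    ext ω; rw [hC, chshSign]; split_ifs <;> ring
  have hu := ae_abs_condOutcome_le_half hlam hD1 hA hD1v hE2.1 hE3.1
  have hv := ae_abs_condOutcome_le_half hlam hD2 hB hD2v hE2.2 hE3.2
  have hEC : ∫ ω, C ω ∂P ≤ 1 / 2 := by
    rw [← integral_condExp hlam.comap_le]
    refine (integral_mono_ae integrable_condExp (integrable_const (1 / 2 : ℝ)) ?_).trans_eq
      (by simp)
    filter_upwards [hC_eq ▸ condExp_chshSign_mul_of_local hA hB hD1 hD2 hD1v hD2v hLOC,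
      ae_all_iff.2 hu, ae_all_iff.2 hv] with ω hω hu hv
    rw [hω]
    linarith [sum_chshSign_mul_le hu hv]
  have hCv : ∀ ω, C ω = 1 ∨ C ω = -1 := fun ω => by
    rw [hC]
    rcases hD1v ω with h₁ | h₁ <;> rcases hD2v ω with h₂ | h₂ <;> split_ifs <;> norm_num [h₁, h₂]
  have hC_meas : Measurable C := by
    have hsign : Measurable fun ω => chshSign (A ω) (B ω) :=
      (measurable_of_countable (Function.uncurry chshSign)).comp (hA.prodMk hB)
    rw [hC_eq]
    exact hsign.mul (hD1.mul hD2)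
  exact ⟨measure_eq_one_le_three_quarters hC_meas hCv hEC, hEC⟩

/-- with `C := D1·D2` except `C := −D1·D2` when `(A,B) = (a′,b)`,
under (E1), (E2*), (E3) and locality (LOC) we have `P(C = +1) ≤ 3/4`, or
equivalently `E(C) ≤ 1/2`.  Settings `a, a′` are modelled by `true, false : Bool`
(likewise `b, b′`), so `(A,B) = (a′,b)` reads `A ω = false ∧ B ω = true`. -/
theorem stmt7 {Ω : Type*} [MeasurableSpace Ω] (P : Measure Ω) [IsProbabilityMeasure P]
    {Λ : Type*} [MeasurableSpace Λ] (lam : Ω → Λ) (hlam : Measurable lam)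
    (A B : Ω → Bool) (hA : Measurable A) (hB : Measurable B)
    (D1 D2 : Ω → ℝ) (hD1 : Measurable D1) (hD2 : Measurable D2)
    (hD1v : ∀ ω, D1 ω = 1 ∨ D1 ω = -1) (hD2v : ∀ ω, D2 ω = 1 ∨ D2 ω = -1)
    (hE1 : IndepFun A B P)
    (hE2 : P {ω | A ω = true} = 1/2 ∧ P {ω | B ω = true} = 1/2)
    (hE3 : IndepFun A lam P ∧ IndepFun B lam P)
    (hLOC : ∀ E1 E2 : Set Ω,
      MeasurableSet[MeasurableSpace.comap (fun ω => (D1 ω, A ω)) inferInstance] E1 →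
      MeasurableSet[MeasurableSpace.comap (fun ω => (D2 ω, B ω)) inferInstance] E2 →
      cprob P (MeasurableSpace.comap lam inferInstance) (E1 ∩ E2) =ᵐ[P]
        fun ω => cprob P (MeasurableSpace.comap lam inferInstance) E1 ω *
          cprob P (MeasurableSpace.comap lam inferInstance) E2 ω)
    (C : Ω → ℝ)
    (hC : ∀ ω, C ω = if A ω = false ∧ B ω = true
        then -(D1 ω * D2 ω) else D1 ω * D2 ω) :
    P {ω | C ω = 1} ≤ 3/4 ∧ ∫ ω, C ω ∂P ≤ 1/2 :=
  stmt7_general P lam hlam A B hA hB D1 D2 hD1 hD2 hD1v hD2v hE2 hE3 hLOC C hC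
end

section
/- If s, t, u, v are real numbers each lying in the interval [0, 1], then t·(u + v) + (1 − t)·((1 − u) + (1 − v)) + s·(v + (1 − u)) + (1 − s)·(u + (1 − v)) ≤ 3. -/
/-- if `s, t, u, v ∈ [0, 1]` then
`t(u+v) + (1−t)((1−u)+(1−v)) + s(v+(1−u)) + (1−s)(u+(1−v)) ≤ 3`. -/
theorem stmt10 (s t u v : ℝ)
    (hs : 0 ≤ s ∧ s ≤ 1) (ht : 0 ≤ t ∧ t ≤ 1)
    (hu : 0 ≤ u ∧ u ≤ 1) (hv : 0 ≤ v ∧ v ≤ 1) :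
    t * (u + v) + (1 - t) * ((1 - u) + (1 - v))
      + s * (v + (1 - u)) + (1 - s) * (u + (1 - v)) ≤ 3 := by
  obtain ⟨h1,h2⟩ := hs; obtain ⟨h3,h4⟩ := ht; obtain ⟨h5,h6⟩ := hu; obtain ⟨h7,h8⟩ := hv; nlinarith [mul_nonneg (mul_nonneg h3 h1) (sub_nonneg.2 h8), mul_nonneg (mul_nonneg h3 (sub_nonneg.2 h2)) (sub_nonneg.2 h6), mul_nonneg (mul_nonneg (sub_nonneg.2 h4) h1) h5, mul_nonneg (mul_nonneg (sub_nonneg.2 h4) (sub_nonneg.2 h2)) h7]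
end

section
/- Let C_1, ..., C_n be {−1, +1}-valued random variables on a probability space (Ω, F, P) such that P(C_1 = +1) ≤ 3/4 and, for every i with 2 ≤ i ≤ n and every vector v ∈ {−1, +1}^{i−1} with P((C_1, ..., C_{i−1}) = v) > 0, P(C_i = +1 | (C_1, ..., C_{i−1}) = v) ≤ 3/4. Then for every k ∈ {0, 1, ..., n}, P(at least k of the variables C_1, ..., C_n equal +1) ≤ P(B_{n,3/4} ≥ k), where B_{n,3/4} denotes a Binomial random variable with n trials and success probability 3/4. -/
/-!
Write `N m` for the number of indices `i < m` with `C i = +1`. The history `(C 0, …, C (m-1))`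
determines `N m` and takes countably many values, so the conditional bound on each history
event gives `P(N m = c, C m = +1) ≤ p · P(N m = c)`. Hence
`P(N (m+1) ≥ c+1) ≤ P(N m ≥ c+1) + p · P(N m = c)
                  = (1-p) · P(N m ≥ c+1) + p · P(N m ≥ c)`,
while by Pascal's rule the binomial tails satisfy this recursion with equality; induction on `m`
concludes.
-/

open MeasureTheory ProbabilityTheory
open scoped ENNReal

theorem Nat.count_congr {p q : ℕ → Prop} [DecidablePred p] [DecidablePred q] {n : ℕ}
    (h : ∀ k < n, p k ↔ q k) : Nat.count p n = Nat.count q n :=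
  le_antisymm (Nat.count_mono_left fun k hk => (h k hk).1)
    (Nat.count_mono_left fun k hk => (h k hk).2)

section binomialTail

open Finset

noncomputable def binomialTail (p : ℝ≥0∞) (n k : ℕ) : ℝ≥0∞ :=
  ∑ j ∈ Icc k n, (n.choose j : ℝ≥0∞) * p ^ j * (1 - p) ^ (n - j)

variable {p : ℝ≥0∞}

theorem binomialTail_zero_right (hp : p ≤ 1) (n : ℕ) : binomialTail p n 0 = 1 := by
  have hsum := add_pow p (1 - p) n
  rw [add_tsub_cancel_of_le hp, one_pow, Nat.range_succ_eq_Icc_zero] at hsum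
  exact (sum_congr rfl fun j _ => by ring).trans hsum.symm

theorem choose_mul_pow_succ_succ (m j : ℕ) :
    ((m + 1).choose (j + 1) : ℝ≥0∞) * p ^ (j + 1) * (1 - p) ^ (m + 1 - (j + 1)) =
      p * ((m.choose j : ℝ≥0∞) * p ^ j * (1 - p) ^ (m - j)) +
        (1 - p) * ((m.choose (j + 1) : ℝ≥0∞) * p ^ (j + 1) * (1 - p) ^ (m - (j + 1))) := by
  rw [Nat.add_sub_add_right, Nat.choose_succ_succ']
  rcases lt_or_ge j m with hjm | hmj
  · rw [show m - j = m - (j + 1) + 1 by omega]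
    push_cast
    ring
  · rw [Nat.choose_eq_zero_of_lt (show m < j + 1 by omega)]
    push_cast
    ring

theorem binomialTail_succ_succ (m k : ℕ) :
    binomialTail p (m + 1) (k + 1) =
      (1 - p) * binomialTail p m (k + 1) + p * binomialTail p m k := by
  have shift (g : ℕ → ℝ≥0∞) :
      ∑ j ∈ Icc (k + 1) (m + 1), g j = ∑ i ∈ Icc k m, g (i + 1) := by
    rw [← map_add_right_Icc, sum_map]
    rfl
  have top : ∑ j ∈ Icc (k + 1) (m + 1), (m.choose j : ℝ≥0∞) * p ^ j * (1 - p) ^ (m - j) =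
      binomialTail p m (k + 1) := by
    refine (sum_subset (Icc_subset_Icc_right m.le_succ) fun j hj hj' => ?_).symm
    rw [Nat.choose_eq_zero_of_lt (by simp only [mem_Icc] at hj hj'; omega)]
    simp
  rw [← top, binomialTail, binomialTail, shift, shift,
    sum_congr rfl fun i _ => choose_mul_pow_succ_succ m i, sum_add_distrib, ← mul_sum,
    ← mul_sum, add_comm]

end binomialTail

section measure

variable {Ω : Type*} [MeasurableSpace Ω] {μ : Measure Ω}

theorem measure_inter_le_of_cond_le [IsFiniteMeasure μ] {s t : Set Ω} (hs : MeasurableSet s)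
    {p : ℝ≥0∞} (h : 0 < μ s → μ[t | s] ≤ p) : μ (s ∩ t) ≤ p * μ s := by
  rcases eq_zero_or_pos (μ s) with h0 | hpos
  · rw [measure_mono_null Set.inter_subset_left h0]
    exact zero_le
  · rw [← cond_mul_eq_inter hs t μ]
    gcongr
    exact h hpos

theorem measure_preimage_inter_le_of_fiber_le {β : Type*} {f : Ω → β}
    (hf : (Set.range f).Countable) (hfib : ∀ y, MeasurableSet (f ⁻¹' {y}))
    {E : Set Ω} {p : ℝ≥0∞} (h : ∀ y, μ (f ⁻¹' {y} ∩ E) ≤ p * μ (f ⁻¹' {y}))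
    (S : Set β) :
    μ (f ⁻¹' S ∩ E) ≤ p * μ (f ⁻¹' S) := by
  set s := S ∩ Set.range f
  have hs : s.Countable := hf.mono Set.inter_subset_right
  rw [← Set.preimage_inter_range, ← Set.biUnion_preimage_singleton, Set.iUnion₂_inter]
  calc μ (⋃ y ∈ s, f ⁻¹' {y} ∩ E)
      ≤ ∑' y : s, μ (f ⁻¹' {(y : β)} ∩ E) := measure_biUnion_le μ hs _
    _ ≤ ∑' y : s, p * μ (f ⁻¹' {(y : β)}) := ENNReal.tsum_le_tsum fun y => h y
    _ = p * μ (⋃ y ∈ s, f ⁻¹' {y}) := by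
      rw [ENNReal.tsum_mul_left, Set.biUnion_preimage_singleton,
        tsum_measure_preimage_singleton hs fun y _ => hfib y]

theorem measure_le_add_ite_le {N : Ω → ℕ} (hN : Measurable N) {E : Set Ω}
    [DecidablePred (· ∈ E)] {p : ℝ≥0∞} (hp : p ≤ 1) {c : ℕ}
    (hE : μ ({ω | N ω = c} ∩ E) ≤ p * μ {ω | N ω = c}) :
    μ {ω | c + 1 ≤ N ω + if ω ∈ E then 1 else 0} ≤
      (1 - p) * μ {ω | c + 1 ≤ N ω} + p * μ {ω | c ≤ N ω} := by
  have hsub : {ω | c + 1 ≤ N ω + if ω ∈ E then 1 else 0} ⊆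
      {ω | c + 1 ≤ N ω} ∪ ({ω | N ω = c} ∩ E) := by
    intro ω (hω : c + 1 ≤ N ω + if ω ∈ E then 1 else 0)
    by_cases hge : c + 1 ≤ N ω
    · exact Or.inl hge
    · split_ifs at hω with h
      · exact Or.inr ⟨(by omega : N ω = c), h⟩
      · omega
  have hsplit : μ {ω | c ≤ N ω} = μ {ω | c + 1 ≤ N ω} + μ {ω | N ω = c} := by
    have hNc : MeasurableSet {ω | N ω = c} := hN (measurableSet_singleton c)
    rw [← measure_union _ hNc]
    · congr 1
      ext ω
      simp only [Set.mem_ofPred_eq, Set.mem_union]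
      omega
    · exact Set.disjoint_left.mpr fun ω h1 h2 => by simp only [Set.mem_ofPred_eq] at h1 h2; omega
  calc μ {ω | c + 1 ≤ N ω + if ω ∈ E then 1 else 0}
      ≤ μ {ω | c + 1 ≤ N ω} + μ ({ω | N ω = c} ∩ E) :=
        (measure_mono hsub).trans (measure_union_le _ _)
    _ ≤ μ {ω | c + 1 ≤ N ω} + p * μ {ω | N ω = c} := by gcongr
    _ = (1 - p) * μ {ω | c + 1 ≤ N ω} + p * μ {ω | c ≤ N ω} := by
      rw [hsplit, mul_add, ← add_assoc, ← add_mul, tsub_add_cancel_of_le hp, one_mul]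

section count

variable {A : ℕ → Set Ω} [∀ i (ω : Ω), Decidable (ω ∈ A i)]

theorem measurable_count (hA : ∀ i, MeasurableSet (A i)) (m : ℕ) :
    Measurable fun ω => Nat.count (fun i => ω ∈ A i) m := by
  induction m with
  | zero => simp only [Nat.count_zero, measurable_const]
  | succ m ih =>
    simp only [Nat.count_succ]
    exact ih.add (Measurable.ite (hA m) measurable_const measurable_const)

theorem measure_le_count_le_binomialTail [IsProbabilityMeasure μ]
    (hA : ∀ i, MeasurableSet (A i)) {p : ℝ≥0∞} (hp : p ≤ 1) (n : ℕ)
    (hstep : ∀ m < n, ∀ c, μ ({ω | Nat.count (fun i => ω ∈ A i) m = c} ∩ A m) ≤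
      p * μ {ω | Nat.count (fun i => ω ∈ A i) m = c}) (k : ℕ) :
    μ {ω | k ≤ Nat.count (fun i => ω ∈ A i) n} ≤ binomialTail p n k := by
  induction n generalizing k with
  | zero =>
    rcases k with _ | k
    · rw [binomialTail_zero_right hp]
      exact prob_le_one
    · simp [Nat.count_zero]
  | succ n ih =>
    rcases k with _ | c
    · rw [binomialTail_zero_right hp]
      exact prob_le_one
    · have ih' := fun k => ih (fun m hm => hstep m (hm.trans n.lt_succ_self)) k
      simp only [Nat.count_succ]
      calc _ ≤ _ := measure_le_add_ite_le (measurable_count hA n) hp (hstep n n.lt_succ_self c)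
        _ ≤ (1 - p) * binomialTail p n (c + 1) + p * binomialTail p n c := by gcongr <;> apply ih'
        _ = _ := (binomialTail_succ_succ n c).symm

end count

theorem measure_count_eq_inter_le_of_history_le {C : ℕ → Ω → ℝ}
    (hCmeas : ∀ i, Measurable (C i)) (hC : ∀ i, (Set.range (C i)).Countable)
    {m : ℕ} {E : Set Ω} {p : ℝ≥0∞}
    (h : ∀ v : Fin m → ℝ, μ ({ω | ∀ j : Fin m, C j ω = v j} ∩ E) ≤
      p * μ {ω | ∀ j : Fin m, C j ω = v j}) (c : ℕ) :
    μ ({ω | Nat.count (fun i => C i ω = 1) m = c} ∩ E) ≤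
      p * μ {ω | Nat.count (fun i => C i ω = 1) m = c} := by
  classical
  let history : Ω → Fin m → ℝ := fun ω j => C j ω
  have hfiber : ∀ v, history ⁻¹' {v} = {ω | ∀ j : Fin m, C j ω = v j} := fun v => by
    ext ω; simp [history, funext_iff]
  have hcount : {ω | Nat.count (fun i => C i ω = 1) m = c} =
      history ⁻¹' {v | Nat.count (fun i => ∃ h : i < m, v ⟨i, h⟩ = 1) m = c} := by
    ext ω
    simp only [Set.mem_ofPred_eq, Set.mem_preimage, history]
    rw [Nat.count_congr (q := fun i => ∃ h : i < m, C i ω = 1) fun i hi =>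
      ⟨fun h => ⟨hi, h⟩, fun ⟨_, h⟩ => h⟩]
  have hrange : (Set.range history).Countable := by
    refine (Set.countable_pi fun j : Fin m => hC j).mono ?_
    rintro _ ⟨ω, rfl⟩ j
    exact Set.mem_range_self ω
  have hmeas : ∀ v, MeasurableSet (history ⁻¹' {v}) := fun v =>
    (measurable_pi_lambda history fun j => hCmeas j) (measurableSet_singleton v)
  rw [hcount]
  exact measure_preimage_inter_le_of_fiber_le hrange hmeas (fun v => hfiber v ▸ h v) _

end measure

theorem stmt11_general {Ω : Type*} [MeasurableSpace Ω] (P : Measure Ω) [IsProbabilityMeasure P]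
    (n : ℕ)
    (C : ℕ → Ω → ℝ) (hCmeas : ∀ i, Measurable (C i))
    (hCv : ∀ i ω, C i ω = 1 ∨ C i ω = -1)
    (hfirst : P {ω | C 0 ω = 1} ≤ 3/4)
    (hcond : ∀ i, 1 ≤ i → i < n → ∀ v : Fin i → ℝ,
      0 < P {ω | ∀ j : Fin i, C j ω = v j} →
      P[|{ω | ∀ j : Fin i, C j ω = v j}] {ω | C i ω = 1} ≤ 3/4)
    (k : ℕ) :
    P {ω | k ≤ ((Finset.range n).filter (fun i => C i ω = 1)).card} ≤
      ∑ j ∈ Finset.Icc k n, (n.choose j : ℝ≥0∞) * (3/4)^j * (1/4)^(n - j) := by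
  have hA : ∀ i, MeasurableSet {ω | C i ω = 1} := fun i => hCmeas i (measurableSet_singleton 1)
  have hrange : ∀ i, (Set.range (C i)).Countable := fun i =>
    (Set.toFinite {1, -1}).countable.mono (Set.range_subset_iff.mpr (hCv i))
  have hhistory : ∀ m < n, ∀ v : Fin m → ℝ,
      P ({ω | ∀ j : Fin m, C j ω = v j} ∩ {ω | C m ω = 1}) ≤
        3/4 * P {ω | ∀ j : Fin m, C j ω = v j} := by
    intro m hm v
    rcases m with _ | m
    · simpa using hfirst
    · have hmeas : MeasurableSet {ω | ∀ j : Fin (m + 1), C j ω = v j} := by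
        simp only [Set.ofPred_forall]
        exact MeasurableSet.iInter fun j => hCmeas j (measurableSet_singleton _)
      exact measure_inter_le_of_cond_le hmeas (hcond _ m.succ_pos hm v)
  have hquarter : (1 : ℝ≥0∞) - 3/4 = 1/4 := by
    refine ENNReal.sub_eq_of_eq_add_rev (ENNReal.div_ne_top (by norm_num) (by norm_num)) ?_
    rw [ENNReal.div_add_div_same, show (3 : ℝ≥0∞) + 1 = 4 by norm_num,
      ENNReal.div_self (by norm_num) (by norm_num)]
  have key := measure_le_count_le_binomialTail (A := fun i => {ω | C i ω = 1}) hA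
    (ENNReal.div_le_of_le_mul (by norm_num)) n
    (fun m hm => measure_count_eq_inter_le_of_history_le hCmeas hrange (hhistory m hm)) k
  rw [binomialTail, hquarter] at key
  simp only [Nat.count_eq_card_filter_range] at key
  exact key

/-- if `C_1, …, C_n` (here indexed `C 0, …, C (n-1)`) are
`{−1,+1}`-valued random variables with `P(C_1 = +1) ≤ 3/4` and, for every `i ≥ 2`,
`P(C_i = +1 | (C_1,…,C_{i−1}) = v) ≤ 3/4` whenever the conditioning event has
positive probability, then for every `k ≤ n`,
`P(at least k of the C_i equal +1) ≤ P(B_{n,3/4} ≥ k)`, the binomial upper tail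
`∑_{j=k}^{n} (n choose j) (3/4)^j (1/4)^{n−j}`. -/
theorem stmt11 {Ω : Type*} [MeasurableSpace Ω] (P : Measure Ω) [IsProbabilityMeasure P]
    (n : ℕ) (hn : 0 < n)
    (C : ℕ → Ω → ℝ) (hCmeas : ∀ i, Measurable (C i))
    (hCv : ∀ i ω, C i ω = 1 ∨ C i ω = -1)
    (hfirst : P {ω | C 0 ω = 1} ≤ 3/4)
    (hcond : ∀ i, 1 ≤ i → i < n → ∀ v : Fin i → ℝ,
      0 < P {ω | ∀ j : Fin i, C j ω = v j} →
      P[|{ω | ∀ j : Fin i, C j ω = v j}] {ω | C i ω = 1} ≤ 3/4)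
    (k : ℕ) (hk : k ≤ n) :
    P {ω | k ≤ ((Finset.range n).filter (fun i => C i ω = 1)).card} ≤
      ∑ j ∈ Finset.Icc k n, (n.choose j : ℝ≥0∞) * (3/4)^j * (1/4)^(n - j) :=
  stmt11_general P n C hCmeas hCv hfirst hcond k
end

section
/- Let C_1, ..., C_n be {−1, +1}-valued random variables on a probability space (Ω, F, P) such that P(C_1 = +1) ≤ 3/4 and, for every i with 2 ≤ i ≤ n and every vector v ∈ {−1, +1}^{i−1} with P((C_1, ..., C_{i−1}) = v) > 0, P(C_i = +1 | (C_1, ..., C_{i−1}) = v) ≤ 3/4. Let C̄_n := (1/n)·Σ_{i=1}^n C_i. Then for every real number z, P(C̄_n > z) ≤ P(B_{n,3/4} > (n/2)·(z + 1)), where B_{n,3/4} denotes a Binomial random variable with n trials and success probability 3/4. -/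
open MeasureTheory ProbabilityTheory
open scoped ENNReal

/-!
Let `N m` be the number of `+1`s among the first `m` signs. Summing the conditional hypothesis
over all histories with `c` successes gives `P(N m = c, C m = 1) ≤ 3/4 · P(N m = c)`, hence the
tail recursion `P(N (m+1) ≥ k+1) ≤ 1/4 · P(N m ≥ k+1) + 3/4 · P(N m ≥ k)`. Binomial tails satisfy
the same recursion with equality (Pascal's rule), so by induction `N n` is stochastically dominated
by `B_{n,3/4}`; and `C̄_n > z` is the event `N n > (n/2)(z+1)` since `∑ C i = 2 N n - n`.
-/

open Finset

section BinomialTail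

variable {R : Type*} [CommSemiring R]

def binomTail (p q : R) (m k : ℕ) : R :=
  ∑ j ∈ range (m + 1) with k ≤ j, (m.choose j : R) * p ^ j * q ^ (m - j)

lemma binomTail_zero_right {p q : R} (hpq : p + q = 1) (m : ℕ) : binomTail p q m 0 = 1 := by
  rw [binomTail, filter_true_of_mem fun j _ => j.zero_le,
    show (1 : R) = (p + q) ^ m by rw [hpq, one_pow], add_pow]
  exact sum_congr rfl fun j _ => by ring

lemma choose_succ_succ_mul_pow_mul_pow (p q : R) (m j : ℕ) :
    ((m + 1).choose (j + 1) : R) * p ^ (j + 1) * q ^ (m - j) =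
      p * ((m.choose j : R) * p ^ j * q ^ (m - j)) +
        q * ((m.choose (j + 1) : R) * p ^ (j + 1) * q ^ (m - (j + 1))) := by
  rw [Nat.choose_succ_succ]
  rcases lt_or_ge j m with hjm | hmj
  · rw [show m - j = m - (j + 1) + 1 by omega]
    push_cast; ring
  · rw [Nat.choose_eq_zero_of_lt (by omega : m < j + 1)]
    push_cast; ring

lemma binomTail_succ_eq_sum_range (p q : R) (m k : ℕ) :
    binomTail p q m (k + 1) = ∑ i ∈ range (m + 1),
      if k ≤ i then (m.choose (i + 1) : R) * p ^ (i + 1) * q ^ (m - (i + 1)) else 0 := by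
  rw [binomTail, sum_filter, sum_range_succ', sum_range_succ]
  simp [Nat.choose_succ_self]

lemma binomTail_succ_succ (p q : R) (m k : ℕ) :
    binomTail p q (m + 1) (k + 1) = q * binomTail p q m (k + 1) + p * binomTail p q m k := by
  rw [binomTail_succ_eq_sum_range, sum_range_succ, binomTail_succ_eq_sum_range, binomTail,
    sum_filter, mul_sum, mul_sum, ← sum_add_distrib]
  simp only [Nat.choose_succ_self, Nat.cast_zero, zero_mul, ite_self, add_zero]
  refine sum_congr rfl fun i _ => ?_
  split_ifs
  · rw [Nat.add_sub_add_right, choose_succ_succ_mul_pow_mul_pow, add_comm]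
  · simp

end BinomialTail

section Successes

open scoped Classical

variable {Ω : Type*} {B : ℕ → Set Ω} {m : ℕ}

noncomputable def successes (B : ℕ → Set Ω) (m : ℕ) (ω : Ω) : Finset ℕ :=
  {i ∈ range m | ω ∈ B i}

lemma successes_subset_range (ω : Ω) : successes B m ω ⊆ range m := filter_subset _ _

lemma card_successes_succ (ω : Ω) :
    #(successes B (m + 1) ω) = #(successes B m ω) + if ω ∈ B m then 1 else 0 := by
  simp only [successes, card_filter, sum_range_succ]

lemma successes_eq_iff {s : Finset ℕ} (hs : s ⊆ range m) (ω : Ω) :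
    successes B m ω = s ↔ ∀ i ∈ range m, (ω ∈ B i ↔ i ∈ s) := by
  simp only [successes, Finset.ext_iff, mem_filter]
  exact ⟨fun h i hi => by simpa [hi] using h i,
    fun h i => ⟨fun ⟨hi, hω⟩ => (h i hi).1 hω, fun his => ⟨hs his, (h i (hs his)).2 his⟩⟩⟩

variable [MeasurableSpace Ω]

lemma measurable_card_successes (hB : ∀ i, MeasurableSet (B i)) (m : ℕ) :
    Measurable fun ω => #(successes B m ω) := by
  simp only [successes, card_filter]
  exact Finset.measurable_sum _ fun i _ => Measurable.ite (hB i) measurable_const measurable_const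

lemma measurableSet_successes_eq (hB : ∀ i, MeasurableSet (B i)) {s : Finset ℕ}
    (hs : s ⊆ range m) : MeasurableSet {ω | successes B m ω = s} := by
  simp only [successes_eq_iff hs, Set.ofPred_forall]
  refine Finset.measurableSet_biInter _ fun i _ => ?_
  by_cases his : i ∈ s
  · simp only [his, iff_true]; exact hB i
  · simp only [his, iff_false]; exact (hB i).compl

end Successes

section Domination

variable {Ω : Type*} [MeasurableSpace Ω] {P : Measure Ω}

lemma measure_inter_le_mul_of_cond_le [IsFiniteMeasure P] {A E : Set Ω} (hA : MeasurableSet A)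
    {p : ℝ≥0∞} (h : 0 < P A → P[E | A] ≤ p) : P (A ∩ E) ≤ p * P A := by
  rcases eq_zero_or_pos (P A) with h0 | hpos
  · simp [measure_inter_null_of_null_left E h0]
  · rw [← cond_mul_eq_inter hA]
    gcongr
    exact h hpos

lemma measure_preimage_inter_le_mul {α : Type*} {X : Ω → α} {S : Finset α}
    (hX : ∀ a ∈ S, MeasurableSet (X ⁻¹' {a})) {E : Set Ω} {p : ℝ≥0∞}
    (h : ∀ a ∈ S, P (X ⁻¹' {a} ∩ E) ≤ p * P (X ⁻¹' {a})) :
    P (X ⁻¹' S ∩ E) ≤ p * P (X ⁻¹' S) := by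
  have hS : MeasurableSet (X ⁻¹' S) := by
    rw [← Set.biUnion_of_singleton (S : Set α), Set.preimage_iUnion₂]
    exact Finset.measurableSet_biUnion S hX
  calc P (X ⁻¹' S ∩ E) = ∑ a ∈ S, P.restrict E (X ⁻¹' {a}) := by
        rw [sum_measure_preimage_singleton S hX, Measure.restrict_apply hS]
    _ = ∑ a ∈ S, P (X ⁻¹' {a} ∩ E) := sum_congr rfl fun a ha => Measure.restrict_apply (hX a ha)
    _ ≤ ∑ a ∈ S, p * P (X ⁻¹' {a}) := sum_le_sum h
    _ = p * P (X ⁻¹' S) := by rw [← mul_sum, sum_measure_preimage_singleton S hX]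

variable {B : ℕ → Set Ω} {p q : ℝ≥0∞}

lemma measure_card_successes_eq_inter_le (hB : ∀ i, MeasurableSet (B i)) {m : ℕ}
    (h : ∀ s ⊆ range m,
      P ({ω | successes B m ω = s} ∩ B m) ≤ p * P {ω | successes B m ω = s}) (c : ℕ) :
    P ({ω | #(successes B m ω) = c} ∩ B m) ≤ p * P {ω | #(successes B m ω) = c} := by
  have hc : {ω | #(successes B m ω) = c} =
      successes B m ⁻¹' ((range m).powerset.filter (#· = c)) := by
    ext ω
    simp [successes_subset_range]
  rw [hc]
  refine measure_preimage_inter_le_mul (fun s hs => ?_) fun s hs => h s ?_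
  · exact measurableSet_successes_eq hB (mem_powerset.1 (mem_filter.1 hs).1)
  · exact mem_powerset.1 (mem_filter.1 hs).1

lemma measure_succ_le_card_successes_succ_le (hB : ∀ i, MeasurableSet (B i)) (hpq : p + q = 1)
    {m : ℕ} (h : ∀ c, P ({ω | #(successes B m ω) = c} ∩ B m) ≤ p * P {ω | #(successes B m ω) = c})
    (k : ℕ) :
    P {ω | k + 1 ≤ #(successes B (m + 1) ω)} ≤
      q * P {ω | k + 1 ≤ #(successes B m ω)} + p * P {ω | k ≤ #(successes B m ω)} := by
  have hsub : {ω | k + 1 ≤ #(successes B (m + 1) ω)} ⊆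
      {ω | k + 1 ≤ #(successes B m ω)} ∪ ({ω | #(successes B m ω) = k} ∩ B m) := by
    intro ω hω
    simp only [Set.mem_ofPred_eq, card_successes_succ] at hω
    split_ifs at hω with hωB
    · by_cases hk : k + 1 ≤ #(successes B m ω)
      · exact Or.inl hk
      · exact Or.inr ⟨by simp only [Set.mem_ofPred_eq]; omega, hωB⟩
    · exact Or.inl hω
  have hsplit : P {ω | k ≤ #(successes B m ω)} =
      P {ω | k + 1 ≤ #(successes B m ω)} + P {ω | #(successes B m ω) = k} := by
    have hk : MeasurableSet {ω | #(successes B m ω) = k} :=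
      measurable_card_successes hB m (measurableSet_singleton k)
    rw [← measure_union _ hk]
    · congr 1; ext ω; simp only [Set.mem_ofPred_eq, Set.mem_union]; omega
    · exact Set.disjoint_left.2 fun ω h1 h2 => by simp only [Set.mem_ofPred_eq] at h1 h2; omega
  calc P {ω | k + 1 ≤ #(successes B (m + 1) ω)}
      ≤ P {ω | k + 1 ≤ #(successes B m ω)} + P ({ω | #(successes B m ω) = k} ∩ B m) :=
        (measure_mono hsub).trans (measure_union_le _ _)
    _ ≤ P {ω | k + 1 ≤ #(successes B m ω)} + p * P {ω | #(successes B m ω) = k} := by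
        gcongr; exact h k
    _ = q * P {ω | k + 1 ≤ #(successes B m ω)} + p * P {ω | k ≤ #(successes B m ω)} := by
        rw [hsplit, mul_add, ← add_assoc, ← add_mul, add_comm q, hpq, one_mul]

theorem measure_le_card_successes_le_binomTail [IsProbabilityMeasure P]
    (hB : ∀ i, MeasurableSet (B i)) (hpq : p + q = 1) {n : ℕ}
    (h : ∀ m < n, ∀ s ⊆ range m,
      P ({ω | successes B m ω = s} ∩ B m) ≤ p * P {ω | successes B m ω = s}) (k : ℕ) :
    P {ω | k ≤ #(successes B n ω)} ≤ binomTail p q n k := by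
  induction n generalizing k with
  | zero =>
    rcases k with _ | k
    · exact prob_le_one.trans_eq (binomTail_zero_right hpq 0).symm
    · simp [successes]
  | succ n ih =>
    rcases k with _ | k
    · exact prob_le_one.trans_eq (binomTail_zero_right hpq _).symm
    · have hn := measure_card_successes_eq_inter_le hB (h n n.lt_succ_self)
      calc P {ω | k + 1 ≤ #(successes B (n + 1) ω)}
          ≤ q * P {ω | k + 1 ≤ #(successes B n ω)} + p * P {ω | k ≤ #(successes B n ω)} :=
            measure_succ_le_card_successes_succ_le hB hpq hn k
        _ ≤ q * binomTail p q n (k + 1) + p * binomTail p q n k := by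
            have ih' := ih fun m hm => h m (hm.trans n.lt_succ_self)
            gcongr <;> apply ih'
        _ = binomTail p q (n + 1) (k + 1) := (binomTail_succ_succ p q n k).symm

end Domination

section SignSequences

variable {Ω : Type*} {C : ℕ → Ω → ℝ}

lemma successes_eq_iff_forall_fin (hC : ∀ i ω, C i ω = 1 ∨ C i ω = -1) {m : ℕ} {s : Finset ℕ}
    (hs : s ⊆ range m) (ω : Ω) :
    successes (fun i => {ω | C i ω = 1}) m ω = s ↔
      ∀ j : Fin m, C j ω = if (j : ℕ) ∈ s then 1 else -1 := by
  rw [successes_eq_iff hs, Fin.forall_iff]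
  refine forall_congr' fun i => ?_
  rw [mem_range]
  refine forall_congr' fun _ => ?_
  rcases hC i ω with h | h <;> by_cases his : i ∈ s <;> norm_num [h, his]

lemma sum_eq_two_mul_card_successes_sub (hC : ∀ i ω, C i ω = 1 ∨ C i ω = -1) (n : ℕ) (ω : Ω) :
    ∑ i ∈ range n, C i ω = 2 * #(successes (fun i => {ω | C i ω = 1}) n ω) - n := by
  calc ∑ i ∈ range n, C i ω = ∑ i ∈ range n, (2 * (if C i ω = 1 then 1 else 0) - 1) :=
        sum_congr rfl fun i _ => by rcases hC i ω with h | h <;> norm_num [h]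
    _ = 2 * #(successes (fun i => {ω | C i ω = 1}) n ω) - n := by
        rw [sum_sub_distrib, ← mul_sum, sum_boole]
        simp [successes]

variable [MeasurableSpace Ω] {P : Measure Ω} [IsProbabilityMeasure P] {n : ℕ} {p : ℝ≥0∞}

lemma measure_successes_eq_inter_le_of_cond_le (hC : ∀ i, Measurable (C i))
    (hC1 : ∀ i ω, C i ω = 1 ∨ C i ω = -1) (hfirst : P {ω | C 0 ω = 1} ≤ p)
    (hcond : ∀ i, 1 ≤ i → i < n → ∀ v : Fin i → ℝ,
      0 < P {ω | ∀ j : Fin i, C j ω = v j} →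
      P[|{ω | ∀ j : Fin i, C j ω = v j}] {ω | C i ω = 1} ≤ p)
    {m : ℕ} (hm : m < n) {s : Finset ℕ} (hs : s ⊆ range m) :
    P ({ω | successes (fun i => {ω | C i ω = 1}) m ω = s} ∩ {ω | C m ω = 1}) ≤
      p * P {ω | successes (fun i => {ω | C i ω = 1}) m ω = s} := by
  have hcyl : {ω | successes (fun i => {ω | C i ω = 1}) m ω = s} =
      {ω | ∀ j : Fin m, C j ω = if (j : ℕ) ∈ s then 1 else -1} :=
    Set.ext (successes_eq_iff_forall_fin hC1 hs)
  have hB i : MeasurableSet {ω | C i ω = 1} := hC i (measurableSet_singleton 1)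
  refine measure_inter_le_mul_of_cond_le (measurableSet_successes_eq hB hs) fun hpos => ?_
  rw [hcyl] at hpos ⊢
  rcases m with _ | m
  · simpa using hfirst
  · exact hcond (m + 1) m.succ_pos hm _ hpos

end SignSequences

lemma lt_natCast_iff_toNat_floor_add_one_le (t : ℝ) (j : ℕ) : t < j ↔ (⌊t⌋ + 1).toNat ≤ j := by
  rw [Int.toNat_le, Int.add_one_le_iff, Int.floor_lt]
  norm_cast

/-- under the same hypotheses as Statement 11, with
`C̄_n := (1/n)·Σ_{i=1}^n C_i`, for every real `z`,
`P(C̄_n > z) ≤ P(B_{n,3/4} > (n/2)(z+1))`, where the right-hand side is the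
binomial probability `∑_{j : (n/2)(z+1) < j} (n choose j) (3/4)^j (1/4)^{n−j}`. -/
theorem stmt12 {Ω : Type*} [MeasurableSpace Ω] (P : Measure Ω) [IsProbabilityMeasure P]
    (n : ℕ) (hn : 0 < n)
    (C : ℕ → Ω → ℝ) (hCmeas : ∀ i, Measurable (C i))
    (hCv : ∀ i ω, C i ω = 1 ∨ C i ω = -1)
    (hfirst : P {ω | C 0 ω = 1} ≤ 3/4)
    (hcond : ∀ i, 1 ≤ i → i < n → ∀ v : Fin i → ℝ,
      0 < P {ω | ∀ j : Fin i, C j ω = v j} →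
      P[|{ω | ∀ j : Fin i, C j ω = v j}] {ω | C i ω = 1} ≤ 3/4)
    (z : ℝ) :
    P {ω | z < (∑ i ∈ Finset.range n, C i ω) / n} ≤
      ∑ j ∈ (Finset.range (n + 1)).filter (fun j : ℕ => (n : ℝ)/2 * (z + 1) < (j : ℝ)),
        (n.choose j : ℝ≥0∞) * (3/4)^j * (1/4)^(n - j) := by
  set B : ℕ → Set Ω := fun i => {ω | C i ω = 1}
  set k := (⌊(n : ℝ) / 2 * (z + 1)⌋ + 1).toNat
  have hLHS : {ω | z < (∑ i ∈ range n, C i ω) / n} = {ω | k ≤ #(successes B n ω)} := by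
    ext ω
    have hn' : (0 : ℝ) < n := by exact_mod_cast hn
    simp only [Set.mem_ofPred_eq, sum_eq_two_mul_card_successes_sub hCv, lt_div_iff₀ hn',
      k, ← lt_natCast_iff_toNat_floor_add_one_le]
    constructor <;> intro h <;> linarith
  have hRHS : (range (n + 1)).filter (fun j : ℕ => (n : ℝ) / 2 * (z + 1) < j) =
      (range (n + 1)).filter (k ≤ ·) :=
    filter_congr fun j _ => lt_natCast_iff_toNat_floor_add_one_le _ j
  have hpq : (3 / 4 : ℝ≥0∞) + 1 / 4 = 1 := by
    rw [ENNReal.div_add_div_same, show (3 : ℝ≥0∞) + 1 = 4 by norm_num,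
      ENNReal.div_self (by norm_num) (by norm_num)]
  rw [hLHS, hRHS]
  exact measure_le_card_successes_le_binomTail (fun i => hCmeas i (measurableSet_singleton 1)) hpq
    (fun m hm s hs => measure_successes_eq_inter_le_of_cond_le hCmeas hCv hfirst hcond hm hs) k
end

section
/- Assume (E1), (E3), and the locality assumption (LOC). Then the pair (A, B) is jointly independent of λ; that is, for every x ∈ {a, a′} and y ∈ {b, b′}, P({A = x} ∩ {B = y} | σ(λ)) = P(A = x)·P(B = y) almost surely. -/
open MeasureTheory ProbabilityTheory

theorem cprob_ae_eq_measureReal_of_indep {Ω : Type*} {m₁ m₂ mΩ : MeasurableSpace Ω}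
    {P : @Measure Ω mΩ} [IsFiniteMeasure P] (hm₁ : m₁ ≤ mΩ) (hm₂ : m₂ ≤ mΩ)
    (hind : Indep m₁ m₂ P) {E : Set Ω} (hE : MeasurableSet[m₁] E) :
    cprob P m₂ E =ᵐ[P] fun _ => P.real E := by
  have hE' : MeasurableSet E := hm₁ E hE
  refine (condExp_indep_eq hm₁ hm₂ (stronglyMeasurable_const.indicator hE) hind).trans ?_
  simp [integral_indicator hE']

theorem cprob_comap_ae_eq_measureReal_of_indepFun {Ω β Λ : Type*} [MeasurableSpace Ω]
    [MeasurableSpace β] [MeasurableSpace Λ] {P : Measure Ω} [IsFiniteMeasure P]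
    {C : Ω → β} {lam : Ω → Λ} (hC : Measurable C) (hlam : Measurable lam)
    (hind : IndepFun C lam P) {s : Set β} (hs : MeasurableSet s) :
    cprob P (MeasurableSpace.comap lam inferInstance) (C ⁻¹' s) =ᵐ[P]
      fun _ => P.real (C ⁻¹' s) :=
  cprob_ae_eq_measureReal_of_indep hC.comap_le hlam.comap_le
    ((IndepFun_iff_Indep C lam P).mp hind) (comap_measurable C hs)

theorem measurableSet_comap_prodMk_snd {Ω α β : Type*} [MeasurableSpace α] [MeasurableSpace β]
    (f : Ω → α) (g : Ω → β) {s : Set β} (hs : MeasurableSet s) :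
    MeasurableSet[MeasurableSpace.comap (fun ω => (f ω, g ω)) inferInstance] (g ⁻¹' s) :=
  comap_measurable _ (measurable_snd hs)

-- The settings `a, a′` are modelled by `true, false : Bool` (likewise `b, b′`).
theorem stmt13_general {Ω : Type*} [MeasurableSpace Ω] (P : Measure Ω) [IsProbabilityMeasure P]
    {Λ : Type*} [MeasurableSpace Λ] (lam : Ω → Λ) (hlam : Measurable lam)
    (A B : Ω → Bool) (hA : Measurable A) (hB : Measurable B)
    (D1 D2 : Ω → ℝ)
    (hE3 : IndepFun A lam P ∧ IndepFun B lam P)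
    (hLOC : ∀ E1 E2 : Set Ω,
      MeasurableSet[MeasurableSpace.comap (fun ω => (D1 ω, A ω)) inferInstance] E1 →
      MeasurableSet[MeasurableSpace.comap (fun ω => (D2 ω, B ω)) inferInstance] E2 →
      cprob P (MeasurableSpace.comap lam inferInstance) (E1 ∩ E2) =ᵐ[P]
        fun ω => cprob P (MeasurableSpace.comap lam inferInstance) E1 ω *
          cprob P (MeasurableSpace.comap lam inferInstance) E2 ω) :
    ∀ x y : Bool,
      cprob P (MeasurableSpace.comap lam inferInstance) ({ω | A ω = x} ∩ {ω | B ω = y})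
        =ᵐ[P] fun _ => (P {ω | A ω = x}).toReal * (P {ω | B ω = y}).toReal := by
  intro x y
  have hloc := hLOC (A ⁻¹' {x}) (B ⁻¹' {y})
    (measurableSet_comap_prodMk_snd D1 A (measurableSet_singleton x))
    (measurableSet_comap_prodMk_snd D2 B (measurableSet_singleton y))
  have hAx := cprob_comap_ae_eq_measureReal_of_indepFun hA hlam hE3.1 (measurableSet_singleton x)
  have hBy := cprob_comap_ae_eq_measureReal_of_indepFun hB hlam hE3.2 (measurableSet_singleton y)
  filter_upwards [hloc, hAx, hBy] with ω hω hAω hBω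
  exact hω.trans (by rw [hAω, hBω]; rfl)

/-- under (E1), (E3) and locality (LOC), the pair `(A, B)` is jointly
independent of `λ`: for every setting values `x, y`,
`P({A = x} ∩ {B = y} | σ(λ)) = P(A = x)·P(B = y)` almost surely.
Settings `a, a′` are modelled by `true, false : Bool` (likewise `b, b′`). -/
theorem stmt13 {Ω : Type*} [MeasurableSpace Ω] (P : Measure Ω) [IsProbabilityMeasure P]
    {Λ : Type*} [MeasurableSpace Λ] (lam : Ω → Λ) (hlam : Measurable lam)
    (A B : Ω → Bool) (hA : Measurable A) (hB : Measurable B)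
    (D1 D2 : Ω → ℝ) (hD1 : Measurable D1) (hD2 : Measurable D2)
    (hD1v : ∀ ω, D1 ω = 1 ∨ D1 ω = -1) (hD2v : ∀ ω, D2 ω = 1 ∨ D2 ω = -1)
    (hE1 : IndepFun A B P)
    (hE3 : IndepFun A lam P ∧ IndepFun B lam P)
    (hLOC : ∀ E1 E2 : Set Ω,
      MeasurableSet[MeasurableSpace.comap (fun ω => (D1 ω, A ω)) inferInstance] E1 →
      MeasurableSet[MeasurableSpace.comap (fun ω => (D2 ω, B ω)) inferInstance] E2 →
      cprob P (MeasurableSpace.comap lam inferInstance) (E1 ∩ E2) =ᵐ[P]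
        fun ω => cprob P (MeasurableSpace.comap lam inferInstance) E1 ω *
          cprob P (MeasurableSpace.comap lam inferInstance) E2 ω) :
    ∀ x y : Bool,
      cprob P (MeasurableSpace.comap lam inferInstance) ({ω | A ω = x} ∩ {ω | B ω = y})
        =ᵐ[P] fun _ => (P {ω | A ω = x}).toReal * (P {ω | B ω = y}).toReal :=
  stmt13_general P lam hlam A B hA hB D1 D2 hE3 hLOC
end

section
/- Suppose λ takes values in a finite set Λ = {l_1, ..., l_n} with P(λ = l_i) > 0 for every i. Assume (E1), (E2), and that the pair (A, B) is independent of λ (i.e., for all x ∈ {a, a′}, y ∈ {b, b′} and all i, P({A = x} ∩ {B = y} ∩ {λ = l_i}) = P(A = x)·P(B = y)·P(λ = l_i)). Then the following two statements are equivalent: (Condition I) for all i ∈ {1, ..., n}, x ∈ {a, a′}, y ∈ {b, b′}, j ∈ {−1, +1}, k ∈ {−1, +1}: P({D1 = j} ∩ {A = x} ∩ {D2 = k} ∩ {B = y} ∩ {λ = l_i}) / P(λ = l_i) = P({D1 = j} ∩ {A = x} ∩ {λ = l_i})·P({D2 = k} ∩ {B = y} ∩ {λ = l_i}) / P(λ =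 l_i)²; (Condition II) for all i, x, y, j, k as above: P({D1 = j} ∩ {A = x} ∩ {D2 = k} ∩ {B = y} ∩ {λ = l_i}) / P({A = x} ∩ {B = y} ∩ {λ = l_i}) = P({D1 = j} ∩ {A = x} ∩ {λ = l_i})·P({D2 = k} ∩ {B = y} ∩ {λ = l_i}) / (P({A = x} ∩ {λ = l_i})·P({B = y} ∩ {λ = l_i})). -/
open MeasureTheory ProbabilityTheory
open scoped ENNReal

lemma stmt14_aux {N M c q : ℝ≥0∞} (hc0 : c ≠ 0) (hct : c ≠ ⊤) (hq0 : q ≠ 0) (hqt : q ≠ ⊤) :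
    N / (c * q) = M / (c * q ^ 2) ↔ N / q = M / q ^ 2 := by
  rw [ENNReal.div_eq_div_iff (mul_ne_zero hc0 (pow_ne_zero 2 hq0))
      (ENNReal.mul_ne_top hct (ENNReal.pow_ne_top hqt)) (mul_ne_zero hc0 hq0)
      (ENNReal.mul_ne_top hct hqt),
    ENNReal.div_eq_div_iff (pow_ne_zero 2 hq0) (ENNReal.pow_ne_top hqt) hq0 hqt,
    mul_assoc, mul_assoc, ENNReal.mul_right_inj hc0 hct]

/-- suppose the hidden state `λ` takes values in a finite set, each
value having positive probability.  Assume (E1), (E2) and that the pair `(A, B)` is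
independent of `λ`.  Then Condition I (locality conditioned on `{λ = l}` with the
`P(·∩{λ=l})/P(λ=l)`-style normalisation) is equivalent to Condition II (the version
normalised by the setting events as well).
Settings `a, a′` are modelled by `true, false : Bool` (likewise `b, b′`);
outcomes `j, k` range over `{−1, +1} ⊆ ℝ`. -/
theorem stmt14 {Ω : Type*} [MeasurableSpace Ω] (P : Measure Ω) [IsProbabilityMeasure P]
    {Λ : Type*} [Fintype Λ] [MeasurableSpace Λ] [MeasurableSingletonClass Λ]
    (lam : Ω → Λ) (hlam : Measurable lam)
    (A B : Ω → Bool) (hA : Measurable A) (hB : Measurable B)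
    (D1 D2 : Ω → ℝ) (hD1 : Measurable D1) (hD2 : Measurable D2)
    (hD1v : ∀ ω, D1 ω = 1 ∨ D1 ω = -1) (hD2v : ∀ ω, D2 ω = 1 ∨ D2 ω = -1)
    (hpos : ∀ l : Λ, 0 < P {ω | lam ω = l})
    (hE1 : IndepFun A B P)
    (hE2 : 0 < P {ω | A ω = true} ∧ 0 < P {ω | A ω = false} ∧
           0 < P {ω | B ω = true} ∧ 0 < P {ω | B ω = false})
    (hABlam : ∀ (x y : Bool) (l : Λ),
      P ({ω | A ω = x} ∩ {ω | B ω = y} ∩ {ω | lam ω = l}) =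
        P {ω | A ω = x} * P {ω | B ω = y} * P {ω | lam ω = l}) :
    (∀ (l : Λ) (x y : Bool) (j k : ℝ), (j = 1 ∨ j = -1) → (k = 1 ∨ k = -1) →
        P ({ω | D1 ω = j} ∩ {ω | A ω = x} ∩ {ω | D2 ω = k} ∩ {ω | B ω = y} ∩
            {ω | lam ω = l}) / P {ω | lam ω = l} =
          P ({ω | D1 ω = j} ∩ {ω | A ω = x} ∩ {ω | lam ω = l}) *
            P ({ω | D2 ω = k} ∩ {ω | B ω = y} ∩ {ω | lam ω = l}) /
            (P {ω | lam ω = l}) ^ 2)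
    ↔
    (∀ (l : Λ) (x y : Bool) (j k : ℝ), (j = 1 ∨ j = -1) → (k = 1 ∨ k = -1) →
        P ({ω | D1 ω = j} ∩ {ω | A ω = x} ∩ {ω | D2 ω = k} ∩ {ω | B ω = y} ∩
            {ω | lam ω = l}) / P ({ω | A ω = x} ∩ {ω | B ω = y} ∩ {ω | lam ω = l}) =
          P ({ω | D1 ω = j} ∩ {ω | A ω = x} ∩ {ω | lam ω = l}) *
            P ({ω | D2 ω = k} ∩ {ω | B ω = y} ∩ {ω | lam ω = l}) /
            (P ({ω | A ω = x} ∩ {ω | lam ω = l}) * P ({ω | B ω = y} ∩ {ω | lam ω = l}))) := by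
  -- measurability of basic sets
  have hmA : ∀ x : Bool, MeasurableSet {ω | A ω = x} := fun x =>
    hA (measurableSet_singleton x)
  have hmB : ∀ y : Bool, MeasurableSet {ω | B ω = y} := fun y =>
    hB (measurableSet_singleton y)
  have hmL : ∀ l : Λ, MeasurableSet {ω | lam ω = l} := fun l =>
    hlam (measurableSet_singleton l)
  -- P(B = true) + P(B = false) = 1
  have hB1 : P {ω | B ω = true} + P {ω | B ω = false} = 1 := by
    rw [← measure_union (by
        rw [Set.disjoint_left]; intro ω h1 h2
        simp only [Set.mem_setOf_eq] at h1 h2; simp [h1] at h2) (hmB false)]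
    have : {ω | B ω = true} ∪ {ω | B ω = false} = Set.univ := by
      ext ω; cases hb : B ω <;> simp [hb]
    rw [this, measure_univ]
  have hA1 : P {ω | A ω = true} + P {ω | A ω = false} = 1 := by
    rw [← measure_union (by
        rw [Set.disjoint_left]; intro ω h1 h2
        simp only [Set.mem_setOf_eq] at h1 h2; simp [h1] at h2) (hmA false)]
    have : {ω | A ω = true} ∪ {ω | A ω = false} = Set.univ := by
      ext ω; cases ha : A ω <;> simp [ha]
    rw [this, measure_univ]
  -- P(A=x ∩ λ=l) = P(A=x) P(λ=l)
  have hAl : ∀ (x : Bool) (l : Λ), P ({ω | A ω = x} ∩ {ω | lam ω = l}) =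
      P {ω | A ω = x} * P {ω | lam ω = l} := by
    intro x l
    have hsplit : {ω | A ω = x} ∩ {ω | lam ω = l} =
        ({ω | A ω = x} ∩ {ω | B ω = true} ∩ {ω | lam ω = l}) ∪
        ({ω | A ω = x} ∩ {ω | B ω = false} ∩ {ω | lam ω = l}) := by
      ext ω
      simp only [Set.mem_inter_iff, Set.mem_union, Set.mem_setOf_eq]
      cases hb : B ω <;> tauto
    have hdisj : Disjoint ({ω | A ω = x} ∩ {ω | B ω = true} ∩ {ω | lam ω = l})
        ({ω | A ω = x} ∩ {ω | B ω = false} ∩ {ω | lam ω = l}) := by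
      rw [Set.disjoint_left]; rintro ω ⟨⟨-, h1⟩, -⟩ ⟨⟨-, h2⟩, -⟩
      simp only [Set.mem_setOf_eq] at h1 h2; simp [h1] at h2
    rw [hsplit, measure_union hdisj (((hmA x).inter (hmB false)).inter (hmL l)),
      hABlam x true l, hABlam x false l]
    calc P {ω | A ω = x} * P {ω | B ω = true} * P {ω | lam ω = l} +
          P {ω | A ω = x} * P {ω | B ω = false} * P {ω | lam ω = l}
        = P {ω | A ω = x} * (P {ω | B ω = true} + P {ω | B ω = false}) *
            P {ω | lam ω = l} := by ring
      _ = P {ω | A ω = x} * P {ω | lam ω = l} := by rw [hB1, mul_one]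
  have hBl : ∀ (y : Bool) (l : Λ), P ({ω | B ω = y} ∩ {ω | lam ω = l}) =
      P {ω | B ω = y} * P {ω | lam ω = l} := by
    intro y l
    have hsplit : {ω | B ω = y} ∩ {ω | lam ω = l} =
        ({ω | A ω = true} ∩ {ω | B ω = y} ∩ {ω | lam ω = l}) ∪
        ({ω | A ω = false} ∩ {ω | B ω = y} ∩ {ω | lam ω = l}) := by
      ext ω
      simp only [Set.mem_inter_iff, Set.mem_union, Set.mem_setOf_eq]
      cases ha : A ω <;> tauto
    have hdisj : Disjoint ({ω | A ω = true} ∩ {ω | B ω = y} ∩ {ω | lam ω = l})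
        ({ω | A ω = false} ∩ {ω | B ω = y} ∩ {ω | lam ω = l}) := by
      rw [Set.disjoint_left]; rintro ω ⟨⟨h1, -⟩, -⟩ ⟨⟨h2, -⟩, -⟩
      simp only [Set.mem_setOf_eq] at h1 h2; simp [h1] at h2
    rw [hsplit, measure_union hdisj (((hmA false).inter (hmB y)).inter (hmL l)),
      hABlam true y l, hABlam false y l]
    calc P {ω | A ω = true} * P {ω | B ω = y} * P {ω | lam ω = l} +
          P {ω | A ω = false} * P {ω | B ω = y} * P {ω | lam ω = l}
        = (P {ω | A ω = true} + P {ω | A ω = false}) * P {ω | B ω = y} *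
            P {ω | lam ω = l} := by ring
      _ = P {ω | B ω = y} * P {ω | lam ω = l} := by rw [hA1, one_mul]
  -- positivity of setting probabilities
  have hApos : ∀ x : Bool, P {ω | A ω = x} ≠ 0 := by
    intro x; cases x
    · exact hE2.2.1.ne'
    · exact hE2.1.ne'
  have hBpos : ∀ y : Bool, P {ω | B ω = y} ≠ 0 := by
    intro y; cases y
    · exact hE2.2.2.2.ne'
    · exact hE2.2.2.1.ne'
  -- key pointwise equivalence
  have key : ∀ (l : Λ) (x y : Bool) (N M : ℝ≥0∞),
      (N / P {ω | lam ω = l} = M / (P {ω | lam ω = l}) ^ 2) ↔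
      (N / P ({ω | A ω = x} ∩ {ω | B ω = y} ∩ {ω | lam ω = l}) =
        M / (P ({ω | A ω = x} ∩ {ω | lam ω = l}) * P ({ω | B ω = y} ∩ {ω | lam ω = l}))) := by
    intro l x y N M
    rw [hABlam x y l, hAl x l, hBl y l]
    have h1 : P {ω | A ω = x} * P {ω | B ω = y} * P {ω | lam ω = l} =
        (P {ω | A ω = x} * P {ω | B ω = y}) * P {ω | lam ω = l} := by ring
    have h2 : P {ω | A ω = x} * P {ω | lam ω = l} *
        (P {ω | B ω = y} * P {ω | lam ω = l}) =
        (P {ω | A ω = x} * P {ω | B ω = y}) * (P {ω | lam ω = l}) ^ 2 := by ring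
    rw [h1, h2]
    exact (stmt14_aux (mul_ne_zero (hApos x) (hBpos y)) (by finiteness)
      (hpos l).ne' (measure_ne_top P _)).symm
  constructor
  · intro h l x y j k hj hk
    exact (key l x y _ _).mp (h l x y j k hj hk)
  · intro h l x y j k hj hk
    exact (key l x y _ _).mpr (h l x y j k hj hk)
end
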